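/- arXiv:1010.1358 — 11 statements merged into one kernel-verified Lean document; each statement's English description precedes it below -/
import Mathlib

section
/- Let A be a finite set, M a positive integer, and P a sub-distribution on A (i.e. P: A → [0,∞) with total mass P(A) := Σ_{a∈A} P(a) ≤ 1). Let {f_X} be a universal₂ ensemble of hash functions from A to {1,…,M}. Then the expectation over X of the collision mass of the pushforward satisfies E_X [ Σ_{m=1}^M ( Σ_{a: f_X(a)=m} P(a) )² ] ≤ Σ_{a∈A} P(a)² + P(A)²/M. Equivalently, E_X e^{−H₂(f_X(A))} ≤ e^{−H₂(A|P)} + P(A)²/M. -/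
open Finset

/-- **Leftover hash lemma (Rényi-2 form).** For a sub-distribution `P` on a finite set `A`
and a universal₂ ensemble `f` of hash functions from `A` to `Fin M`,
the expected collision mass of the pushforward is at most
`∑ a, P a ^ 2 + (∑ a, P a) ^ 2 / M`. -/
theorem stmt_0 {A : Type*} [Fintype A] (M : ℕ) (hM : 0 < M)
    (P : A → ℝ) (hP0 : ∀ a, 0 ≤ P a) (hP1 : ∑ a, P a ≤ 1)
    {Ω : Type*} [Fintype Ω] (μ : Ω → ℝ) (hμ0 : ∀ ω, 0 ≤ μ ω) (hμ1 : ∑ ω, μ ω = 1)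
    (f : Ω → A → Fin M)
    (huniv : ∀ a a' : A, a ≠ a' →
      ∑ ω ∈ univ.filter (fun ω => f ω a = f ω a'), μ ω ≤ 1 / M) :
    ∑ ω, μ ω * (∑ m : Fin M, (∑ a ∈ univ.filter (fun a => f ω a = m), P a) ^ 2)
      ≤ (∑ a, P a ^ 2) + (∑ a, P a) ^ 2 / M := by
  classical
  have key : ∀ ω, (∑ m : Fin M, (∑ a ∈ univ.filter (fun a => f ω a = m), P a) ^ 2)
      = ∑ a, ∑ a', if f ω a = f ω a' then P a * P a' else 0 := by
    intro ω
    have h1 : ∀ m : Fin M,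
        (∑ a ∈ univ.filter (fun a => f ω a = m), P a) ^ 2
        = ∑ a, ∑ a', if f ω a = m then (if f ω a' = m then P a * P a' else 0) else 0 := by
      intro m
      rw [sq, Finset.sum_mul_sum]
      simp only [Finset.sum_filter]
      apply Finset.sum_congr rfl
      intro a _
      by_cases h : f ω a = m <;> simp [h, Finset.sum_filter]
    simp only [h1]
    rw [Finset.sum_comm]
    apply Finset.sum_congr rfl
    intro a _
    rw [Finset.sum_comm]
    apply Finset.sum_congr rfl
    intro a' _
    rw [Finset.sum_ite_eq univ (f ω a) (fun m => if f ω a' = m then P a * P a' else 0)]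
    simp [eq_comm]
  have swap : ∑ ω, μ ω * (∑ m : Fin M, (∑ a ∈ univ.filter (fun a => f ω a = m), P a) ^ 2)
      = ∑ a, ∑ a', (∑ ω ∈ univ.filter (fun ω => f ω a = f ω a'), μ ω) * (P a * P a') := by
    simp only [key, Finset.mul_sum]
    rw [Finset.sum_comm]
    congr 1; ext a
    rw [Finset.sum_comm]
    congr 1; ext a'
    rw [Finset.sum_filter, Finset.sum_mul]
    congr 1; ext ω
    by_cases h : f ω a = f ω a' <;> simp [h]
  rw [swap]
  have hdiag : ∀ a : A, (∑ ω ∈ univ.filter (fun ω => f ω a = f ω a), μ ω) = 1 := by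
    intro a
    rw [Finset.filter_true_of_mem (by intro ω _; rfl)]
    exact hμ1
  have step1 : ∑ a, ∑ a', (∑ ω ∈ univ.filter (fun ω => f ω a = f ω a'), μ ω) * (P a * P a')
      ≤ ∑ a, (P a ^ 2 + ∑ a' ∈ univ.erase a, (1 / (M:ℝ)) * (P a * P a')) := by
    apply Finset.sum_le_sum
    intro a _
    rw [← Finset.add_sum_erase univ _ (Finset.mem_univ a)]
    apply add_le_add
    · rw [hdiag a, one_mul, sq]
    · apply Finset.sum_le_sum
      intro a' ha'
      have hne : a ≠ a' := fun h => (Finset.mem_erase.mp ha').1 h.symm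
      exact mul_le_mul_of_nonneg_right (huniv a a' hne)
        (mul_nonneg (hP0 a) (hP0 a'))
  refine step1.trans ?_
  rw [Finset.sum_add_distrib]
  apply add_le_add le_rfl
  have : ∑ a, ∑ a' ∈ univ.erase a, (1 / (M:ℝ)) * (P a * P a')
      ≤ ∑ a : A, ∑ a' : A, (1 / (M:ℝ)) * (P a * P a') := by
    apply Finset.sum_le_sum
    intro a _
    apply Finset.sum_le_sum_of_subset_of_nonneg (Finset.erase_subset a univ)
    intro a' _ _
    exact mul_nonneg (by positivity) (mul_nonneg (hP0 a) (hP0 a'))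
  refine this.trans (le_of_eq ?_)
  rw [sq, Finset.sum_mul_sum, Finset.sum_div]
  apply Finset.sum_congr rfl
  intro a _
  rw [Finset.sum_div]
  apply Finset.sum_congr rfl
  intro a' _
  ring
end

section
/- Let A be a finite set, M a positive integer, and P a sub-distribution on A. Let {f_X} be a universal₂ ensemble of hash functions from A to {1,…,M}. Then E_X d₁(P^{f_X(A)}) ≤ M^{1/2} · (Σ_{a∈A} P(a)²)^{1/2} = M^{1/2} e^{−H₂(A|P)/2}. -/
open Finset

private lemma l1_le_sqrt_card {ι : Type*} [Fintype ι] (x : ι → ℝ) :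
    ∑ i, |x i| ≤ Real.sqrt (Fintype.card ι) * Real.sqrt (∑ i, x i ^ 2) := by
  have h := Finset.sum_mul_sq_le_sq_mul_sq univ (fun _ => (1:ℝ)) (fun i => |x i|)
  simp only [one_mul, one_pow, sq_abs, Finset.sum_const, nsmul_eq_mul, Finset.card_univ, mul_one] at h
  have h0 : (0:ℝ) ≤ ∑ i, |x i| := Finset.sum_nonneg fun i _ => abs_nonneg _
  calc ∑ i, |x i| = Real.sqrt ((∑ i, |x i|)^2) := (Real.sqrt_sq h0).symm
    _ ≤ Real.sqrt ((Fintype.card ι : ℝ) * ∑ i, x i ^ 2) := Real.sqrt_le_sqrt h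
    _ = _ := Real.sqrt_mul (Nat.cast_nonneg _) _

/-- For a sub-distribution `P` on a finite set `A` and a universal₂ ensemble of hash
functions `f : Ω → A → Fin M`, the expected `L¹` distance of the pushforward to the
rescaled uniform distribution is at most `√M · √(∑ a, P a ^ 2) = √M · e^{-H₂(A|P)/2}`. -/
theorem stmt_1 {A : Type*} [Fintype A] (M : ℕ) (hM : 0 < M)
    (P : A → ℝ) (hP0 : ∀ a, 0 ≤ P a) (hP1 : ∑ a, P a ≤ 1)
    {Ω : Type*} [Fintype Ω] (μ : Ω → ℝ) (hμ0 : ∀ ω, 0 ≤ μ ω) (hμ1 : ∑ ω, μ ω = 1)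
    (f : Ω → A → Fin M)
    (huniv : ∀ a a' : A, a ≠ a' →
      ∑ ω ∈ univ.filter (fun ω => f ω a = f ω a'), μ ω ≤ 1 / M) :
    ∑ ω, μ ω * (∑ m : Fin M,
        |(∑ a ∈ univ.filter (fun a => f ω a = m), P a) - (∑ a, P a) / M|)
      ≤ Real.sqrt M * Real.sqrt (∑ a, P a ^ 2) := by
  classical
  have hMne : (M:ℝ) ≠ 0 := Nat.cast_ne_zero.mpr hM.ne'
  set S : ℝ := ∑ a, P a with hS
  set Q : Ω → Fin M → ℝ := fun ω m => ∑ a ∈ univ.filter (fun a => f ω a = m), P a with hQ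
  set V : Ω → ℝ := fun ω => ∑ m, (Q ω m - S / M) ^ 2 with hV
  have hV0 : ∀ ω, 0 ≤ V ω := fun ω => Finset.sum_nonneg fun m _ => sq_nonneg _
  have hQsum : ∀ ω, ∑ m, Q ω m = S := fun ω => Finset.sum_fiberwise univ (f ω) P
  -- V ω = ∑ Q² - S²/M
  have hVeq : ∀ ω, V ω = (∑ m, Q ω m ^ 2) - S^2 / M := by
    intro ω
    have expand : ∀ m : Fin M, (Q ω m - S/M)^2
        = Q ω m ^ 2 - 2*(S/M)*Q ω m + (S/M)^2 := fun m => by ring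
    rw [hV]
    simp only [expand]
    rw [Finset.sum_add_distrib, Finset.sum_sub_distrib, ← Finset.mul_sum, hQsum ω,
      Finset.sum_const, Finset.card_univ, Fintype.card_fin, nsmul_eq_mul]
    field_simp
    ring
  -- ∑ m, Q ω m ^ 2 as a double sum over A
  have hQ2 : ∀ ω, ∑ m, Q ω m ^ 2
      = ∑ a, ∑ a', if f ω a' = f ω a then P a * P a' else 0 := by
    intro ω
    have h1 : ∑ m, Q ω m ^ 2 = ∑ a, P a * Q ω (f ω a) := by
      rw [← Finset.sum_fiberwise univ (f ω) (fun a => P a * Q ω (f ω a))]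
      refine Finset.sum_congr rfl fun m _ => ?_
      rw [sq, Finset.sum_mul]
      refine Finset.sum_congr rfl fun a ha => ?_
      rw [(Finset.mem_filter.mp ha).2]
    rw [h1]
    refine Finset.sum_congr rfl fun a _ => ?_
    rw [hQ]
    simp only [Finset.mul_sum, Finset.sum_filter]
    exact Finset.sum_congr rfl fun a' _ => by split <;> simp
  -- expectation of ∑ Q² bounded
  have key : ∑ ω, μ ω * (∑ m, Q ω m ^ 2) ≤ (∑ a, P a ^ 2) + S^2 / M := by
    have swap : ∑ ω, μ ω * (∑ m, Q ω m ^ 2)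
        = ∑ a, ∑ a', (∑ ω ∈ univ.filter (fun ω => f ω a' = f ω a), μ ω) * (P a * P a') := by
      simp only [hQ2, Finset.mul_sum]
      rw [Finset.sum_comm]
      refine Finset.sum_congr rfl fun a _ => ?_
      rw [Finset.sum_comm]
      refine Finset.sum_congr rfl fun a' _ => ?_
      rw [Finset.sum_filter, Finset.sum_mul]
      exact Finset.sum_congr rfl fun ω _ => by split <;> ring
    rw [swap]
    have hbound : ∀ a : A, ∑ a', (∑ ω ∈ univ.filter (fun ω => f ω a' = f ω a), μ ω) * (P a * P a')
        ≤ P a ^ 2 + P a * S / M := by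
      intro a
      rw [← Finset.sum_erase_add _ _ (Finset.mem_univ a)]
      have hdiag : (∑ ω ∈ univ.filter (fun ω => f ω a = f ω a), μ ω) * (P a * P a) = P a ^ 2 := by
        rw [Finset.filter_true_of_mem (fun _ _ => rfl), hμ1]; ring
      rw [hdiag]
      have hoff : ∑ a' ∈ univ.erase a,
          (∑ ω ∈ univ.filter (fun ω => f ω a' = f ω a), μ ω) * (P a * P a')
          ≤ P a * S / M := by
        calc ∑ a' ∈ univ.erase a,
              (∑ ω ∈ univ.filter (fun ω => f ω a' = f ω a), μ ω) * (P a * P a')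
            ≤ ∑ a' ∈ univ.erase a, (1 / M) * (P a * P a') := by
              refine Finset.sum_le_sum fun a' ha' => ?_
              exact mul_le_mul_of_nonneg_right
                (huniv a' a (Finset.ne_of_mem_erase ha'))
                (mul_nonneg (hP0 a) (hP0 a'))
          _ ≤ ∑ a', (1 / M) * (P a * P a') := by
              refine Finset.sum_le_sum_of_subset_of_nonneg (Finset.subset_univ _)
                fun a' _ _ => ?_
              exact mul_nonneg (by positivity) (mul_nonneg (hP0 a) (hP0 a'))
          _ = P a * S / M := by
              rw [← Finset.mul_sum, ← Finset.mul_sum, hS]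
              ring
      linarith [hoff]
    calc ∑ a, ∑ a', (∑ ω ∈ univ.filter (fun ω => f ω a' = f ω a), μ ω) * (P a * P a')
        ≤ ∑ a, (P a ^ 2 + P a * S / M) := Finset.sum_le_sum fun a _ => hbound a
      _ = (∑ a, P a ^ 2) + S^2 / M := by
          rw [Finset.sum_add_distrib]
          congr 1
          rw [← Finset.sum_div, ← Finset.sum_mul, ← hS]
          ring
  -- expectation of V bounded
  have hEV : ∑ ω, μ ω * V ω ≤ ∑ a, P a ^ 2 := by
    have : ∑ ω, μ ω * V ω = (∑ ω, μ ω * (∑ m, Q ω m ^ 2)) - S^2/M := by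
      simp only [hVeq, mul_sub]
      rw [Finset.sum_sub_distrib, ← Finset.sum_mul, hμ1]
      ring
    rw [this]
    linarith [key]
  have hEV0 : 0 ≤ ∑ ω, μ ω * V ω :=
    Finset.sum_nonneg fun ω _ => mul_nonneg (hμ0 ω) (hV0 ω)
  -- Jensen via Cauchy–Schwarz
  have step2 : ∑ ω, μ ω * Real.sqrt (V ω) ≤ Real.sqrt (∑ ω, μ ω * V ω) := by
    have h := Finset.sum_mul_sq_le_sq_mul_sq univ
      (fun ω => Real.sqrt (μ ω)) (fun ω => Real.sqrt (μ ω * V ω))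
    have heq : ∀ ω : Ω, Real.sqrt (μ ω) * Real.sqrt (μ ω * V ω)
        = μ ω * Real.sqrt (V ω) := by
      intro ω
      rw [Real.sqrt_mul (hμ0 ω), ← mul_assoc, Real.mul_self_sqrt (hμ0 ω)]
    simp only [heq, Real.sq_sqrt (hμ0 _), Real.sq_sqrt (mul_nonneg (hμ0 _) (hV0 _)), hμ1,
      one_mul] at h
    have h0 : (0:ℝ) ≤ ∑ ω, μ ω * Real.sqrt (V ω) :=
      Finset.sum_nonneg fun ω _ => mul_nonneg (hμ0 ω) (Real.sqrt_nonneg _)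
    calc ∑ ω, μ ω * Real.sqrt (V ω)
        = Real.sqrt ((∑ ω, μ ω * Real.sqrt (V ω))^2) := (Real.sqrt_sq h0).symm
      _ ≤ Real.sqrt (∑ ω, μ ω * V ω) := Real.sqrt_le_sqrt h
  -- pointwise step 1
  have step1 : ∀ ω, ∑ m : Fin M, |Q ω m - S/M| ≤ Real.sqrt M * Real.sqrt (V ω) := by
    intro ω
    have := l1_le_sqrt_card (fun m : Fin M => Q ω m - S/M)
    simpa [Fintype.card_fin] using this
  -- conclude
  calc ∑ ω, μ ω * (∑ m : Fin M, |Q ω m - S/M|)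
      ≤ ∑ ω, μ ω * (Real.sqrt M * Real.sqrt (V ω)) :=
        Finset.sum_le_sum fun ω _ => mul_le_mul_of_nonneg_left (step1 ω) (hμ0 ω)
    _ = Real.sqrt M * ∑ ω, μ ω * Real.sqrt (V ω) := by
        rw [Finset.mul_sum]; exact Finset.sum_congr rfl fun ω _ => by ring
    _ ≤ Real.sqrt M * Real.sqrt (∑ ω, μ ω * V ω) :=
        mul_le_mul_of_nonneg_left step2 (Real.sqrt_nonneg _)
    _ ≤ Real.sqrt M * Real.sqrt (∑ a, P a ^ 2) :=
        mul_le_mul_of_nonneg_left (Real.sqrt_le_sqrt hEV) (Real.sqrt_nonneg _)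
end

section
/- (Main theorem.) Let A be a finite set, M a positive integer, and P a sub-distribution on A. Let {f_X} be a universal₂ ensemble of hash functions from A to {1,…,M}. Then for every s with 0 ≤ s ≤ 1, E_X d₁(P^{f_X(A)}) ≤ 3 · M^{s/(1+s)} · (Σ_{a∈A} P(a)^{1+s})^{1/(1+s)} = 3 M^{s/(1+s)} e^{−H̃_{1+s}(A|P)/(1+s)}. -/
/-!
Split `A` at the threshold `T` with `M T^{1+s} = ∑ P^{1+s}`. On the light part `{P ≤ T}`,
universality bounds the expected collision mass, so the expected squared ℓ² distance of the
hashed distribution from uniform is at most `∑_{P ≤ T} P² ≤ T^{1-s} ∑ P^{1+s} = M T²`; Cauchy–Schwarz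
over `Ω × Fin M` turns this into the ℓ¹ bound `M T`. The heavy part has mass at most
`T^{-s} ∑ P^{1+s} = M T`, hence contributes at most `2 M T` to `d₁`. Finally
`M T = M^{s/(1+s)} (∑ P^{1+s})^{1/(1+s)}`.
-/

open Finset

section Pushforward

variable {A β : Type*} [Fintype β] [DecidableEq β]

/-- `d₁(P^{f(s)})` for the restriction of `P` to `s`: the ℓ¹ distance of its push-forward along
`f` from the uniform sub-distribution on `β` of the same mass. -/
noncomputable def pushforwardL1Dev (f : A → β) (P : A → ℝ) (s : Finset A) : ℝ :=
  ∑ b, |∑ a ∈ s with f a = b, P a - (∑ a ∈ s, P a) / Fintype.card β|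

lemma pushforwardL1Dev_le_filter_add_filter_not (f : A → β) (P : A → ℝ) (s : Finset A) (p : A → Prop)
    [DecidablePred p] :
    pushforwardL1Dev f P s ≤
      pushforwardL1Dev f P (s.filter p) + pushforwardL1Dev f P (s.filter (¬ p ·)) := by
  unfold pushforwardL1Dev
  rw [← sum_add_distrib]
  refine sum_le_sum fun b _ => (abs_add_le _ _).trans_eq' ?_
  rw [← sum_filter_add_sum_filter_not s p P,
    ← sum_filter_add_sum_filter_not (s.filter (f · = b)) p P, filter_comm, filter_comm (¬ p ·)]
  ring_nf

lemma pushforwardL1Dev_le_two_mul (f : A → β) {P : A → ℝ} {s : Finset A}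
    (hP : ∀ a ∈ s, 0 ≤ P a) :
    pushforwardL1Dev f P s ≤ 2 * ∑ a ∈ s, P a := by
  set c := ∑ a ∈ s, P a
  set n : ℝ := (Fintype.card β : ℝ)
  have hc : 0 ≤ c := sum_nonneg hP
  have hcn : 0 ≤ c / n := by positivity
  have hnc : n * (c / n) ≤ c := by
    rcases eq_or_ne n 0 with hn | hn
    · simp [hn, hc]
    · rw [mul_div_cancel₀ _ hn]
  calc pushforwardL1Dev f P s ≤ ∑ b, (∑ a ∈ s with f a = b, P a + c / n) := by
        refine sum_le_sum fun b _ => abs_sub_le_iff.2 ⟨?_, ?_⟩ <;>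
          linarith [sum_nonneg fun a (ha : a ∈ s.filter (f · = b)) => hP a (mem_filter.1 ha).1, hcn]
    _ = c + n * (c / n) := by
        rw [sum_add_distrib, sum_fiberwise, sum_const, card_univ, nsmul_eq_mul]
    _ ≤ 2 * c := by linarith

lemma sum_sq_sum_fiber (f : A → β) (P : A → ℝ) (s : Finset A) :
    ∑ b, (∑ a ∈ s with f a = b, P a) ^ 2 = ∑ a ∈ s, P a * ∑ a' ∈ s with f a = f a', P a' :=
  calc ∑ b, (∑ a ∈ s with f a = b, P a) ^ 2
      = ∑ b, ∑ a ∈ s with f a = b, P a * ∑ a' ∈ s with f a = f a', P a' := by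
        refine sum_congr rfl fun b _ => ?_
        rw [sq, sum_mul]
        refine sum_congr rfl fun a ha => ?_
        simp_rw [(mem_filter.1 ha).2, eq_comm]
    _ = ∑ a ∈ s, P a * ∑ a' ∈ s with f a = f a', P a' := sum_fiberwise s f _

end Pushforward

lemma sum_sq_sub_div_card {β : Type*} [Fintype β] (Q : β → ℝ) {c : ℝ} (hQ : ∑ b, Q b = c) :
    ∑ b, (Q b - c / Fintype.card β) ^ 2 = ∑ b, Q b ^ 2 - c ^ 2 / Fintype.card β := by
  set n : ℝ := (Fintype.card β : ℝ)
  rcases eq_or_ne n 0 with hn | hn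
  · simp [hn]
  · simp_rw [sub_sq, sum_add_distrib, sum_sub_distrib, ← sum_mul, ← mul_sum, hQ, sum_const,
      card_univ, nsmul_eq_mul]
    field_simp
    ring

lemma sq_expected_sum_abs_le {Ω β : Type*} [Fintype Ω] [Fintype β] {μ : Ω → ℝ}
    (hμ0 : ∀ ω, 0 ≤ μ ω) (hμ1 : ∑ ω, μ ω = 1) (X : Ω → β → ℝ) :
    (∑ ω, μ ω * ∑ b, |X ω b|) ^ 2 ≤ Fintype.card β * ∑ ω, μ ω * ∑ b, X ω b ^ 2 := by
  have hmass : ∑ ω, ∑ _b : β, μ ω = Fintype.card β := by simp [← mul_sum, hμ1]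
  have hcs := sum_sq_le_sum_mul_sum_of_sq_le_mul (univ : Finset (Ω × β))
    (r := fun x => μ x.1 * |X x.1 x.2|) (g := fun x => μ x.1 * X x.1 x.2 ^ 2)
    (fun x _ => hμ0 x.1) (fun x _ => mul_nonneg (hμ0 x.1) (sq_nonneg _))
    fun x _ => le_of_eq (by rw [mul_pow, sq_abs]; ring)
  simp only [Fintype.sum_prod_type, ← mul_sum] at hcs
  rwa [hmass] at hcs

section Universal

variable {A β Ω : Type*} [Fintype β] [DecidableEq β] [Fintype Ω] {μ : Ω → ℝ}

lemma expected_sum_sq_sum_fiber_le (hμ1 : ∑ ω, μ ω = 1) {f : Ω → A → β}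
    (huniv : ∀ a a' : A, a ≠ a' → ∑ ω with f ω a = f ω a', μ ω ≤ 1 / Fintype.card β)
    {P : A → ℝ} {s : Finset A} (hP : ∀ a ∈ s, 0 ≤ P a) :
    ∑ ω, μ ω * ∑ b, (∑ a ∈ s with f ω a = b, P a) ^ 2 ≤
      ∑ a ∈ s, P a ^ 2 + (∑ a ∈ s, P a) ^ 2 / Fintype.card β := by
  classical
  have hpair : ∀ a ∈ s, ∀ a' ∈ s, P a * P a' * ∑ ω with f ω a = f ω a', μ ω ≤
      (if a = a' then P a ^ 2 else 0) + P a * P a' / Fintype.card β := by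
    intro a ha a' ha'
    have hPP : 0 ≤ P a * P a' := mul_nonneg (hP a ha) (hP a' ha')
    split_ifs with h
    · subst h
      simp only [filter_true, hμ1, mul_one, sq, le_add_iff_nonneg_right]
      positivity
    · calc _ ≤ P a * P a' * (1 / Fintype.card β) := mul_le_mul_of_nonneg_left (huniv a a' h) hPP
        _ = _ := by rw [zero_add, mul_one_div]
  calc ∑ ω, μ ω * ∑ b, (∑ a ∈ s with f ω a = b, P a) ^ 2
      = ∑ a ∈ s, ∑ a' ∈ s, P a * P a' * ∑ ω with f ω a = f ω a', μ ω := by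
        simp_rw [sum_sq_sum_fiber, sum_filter, mul_sum]
        rw [sum_comm]
        refine sum_congr rfl fun a _ => ?_
        rw [sum_comm]
        refine sum_congr rfl fun a' _ => sum_congr rfl fun ω _ => ?_
        split_ifs <;> ring
    _ ≤ ∑ a ∈ s, ∑ a' ∈ s, ((if a = a' then P a ^ 2 else 0) + P a * P a' / Fintype.card β) :=
        sum_le_sum fun a ha => sum_le_sum fun a' ha' => hpair a ha a' ha'
    _ = _ := by
        simp_rw [sum_add_distrib, sum_ite_eq, sq (∑ a ∈ s, P a), sum_mul_sum, sum_div]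
        simp +contextual

lemma expected_sum_sq_sub_le (hμ1 : ∑ ω, μ ω = 1) {f : Ω → A → β}
    (huniv : ∀ a a' : A, a ≠ a' → ∑ ω with f ω a = f ω a', μ ω ≤ 1 / Fintype.card β)
    {P : A → ℝ} {s : Finset A} (hP : ∀ a ∈ s, 0 ≤ P a) :
    ∑ ω, μ ω * ∑ b, (∑ a ∈ s with f ω a = b, P a - (∑ a ∈ s, P a) / Fintype.card β) ^ 2 ≤
      ∑ a ∈ s, P a ^ 2 := by
  have hvar ω := sum_sq_sub_div_card _ (sum_fiberwise s (f ω) P)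
  simp_rw [hvar, mul_sub, sum_sub_distrib, ← sum_mul, hμ1, one_mul]
  linarith [expected_sum_sq_sum_fiber_le hμ1 huniv hP]

theorem expected_pushforwardL1Dev_le (hμ0 : ∀ ω, 0 ≤ μ ω) (hμ1 : ∑ ω, μ ω = 1) {f : Ω → A → β}
    (huniv : ∀ a a' : A, a ≠ a' → ∑ ω with f ω a = f ω a', μ ω ≤ 1 / Fintype.card β)
    {P : A → ℝ} {s : Finset A} (hP : ∀ a ∈ s, 0 ≤ P a) (p : A → Prop) [DecidablePred p] :
    ∑ ω, μ ω * pushforwardL1Dev (f ω) P s ≤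
      √(Fintype.card β * ∑ a ∈ s with p a, P a ^ 2) + 2 * ∑ a ∈ s with ¬ p a, P a := by
  have hlight : ∑ ω, μ ω * pushforwardL1Dev (f ω) P (s.filter p) ≤
      √(Fintype.card β * ∑ a ∈ s with p a, P a ^ 2) :=
    (le_abs_self _).trans <| Real.abs_le_sqrt <| (sq_expected_sum_abs_le hμ0 hμ1 _).trans <|
      mul_le_mul_of_nonneg_left
        (expected_sum_sq_sub_le hμ1 huniv fun a ha => hP a (mem_filter.1 ha).1) (Nat.cast_nonneg _)
  have hheavy : ∑ ω, μ ω * pushforwardL1Dev (f ω) P (s.filter (¬ p ·)) ≤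
      2 * ∑ a ∈ s with ¬ p a, P a :=
    calc _ ≤ ∑ ω, μ ω * (2 * ∑ a ∈ s with ¬ p a, P a) :=
          sum_le_sum fun ω _ => mul_le_mul_of_nonneg_left
            (pushforwardL1Dev_le_two_mul _ fun a ha => hP a (mem_filter.1 ha).1) (hμ0 ω)
      _ = _ := by rw [← sum_mul, hμ1, one_mul]
  calc _ ≤ ∑ ω, (μ ω * pushforwardL1Dev (f ω) P (s.filter p)
          + μ ω * pushforwardL1Dev (f ω) P (s.filter (¬ p ·))) :=
        sum_le_sum fun ω _ => (mul_add (μ ω) _ _).symm ▸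
          mul_le_mul_of_nonneg_left (pushforwardL1Dev_le_filter_add_filter_not _ _ _ p) (hμ0 ω)
    _ ≤ _ := by
        rw [sum_add_distrib]
        exact add_le_add hlight hheavy

end Universal

section Threshold

variable {A : Type*} {s : Finset A} {P : A → ℝ} {T t : ℝ}

lemma sum_sq_le_rpow_mul_sum_rpow (hP : ∀ a ∈ s, 0 ≤ P a) (hPT : ∀ a ∈ s, P a ≤ T)
    (ht : t ≤ 1) : ∑ a ∈ s, P a ^ 2 ≤ T ^ (1 - t) * ∑ a ∈ s, P a ^ (1 + t) := by
  rw [mul_sum]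
  refine sum_le_sum fun a ha => ?_
  calc P a ^ 2 = P a ^ (1 - t) * P a ^ (1 + t) := by
        rw [← Real.rpow_add' (hP a ha) (by ring_nf; norm_num)]
        norm_num
    _ ≤ T ^ (1 - t) * P a ^ (1 + t) := by
        have hPa := hP a ha
        gcongr
        exact hPT a ha

lemma rpow_mul_sum_le_sum_rpow (hT : 0 ≤ T) (hTP : ∀ a ∈ s, T ≤ P a) (ht : 0 ≤ t) :
    T ^ t * ∑ a ∈ s, P a ≤ ∑ a ∈ s, P a ^ (1 + t) := by
  rw [mul_sum]
  refine sum_le_sum fun a ha => ?_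
  have hPa : 0 ≤ P a := hT.trans (hTP a ha)
  calc T ^ t * P a ≤ P a ^ t * P a := by gcongr; exact hTP a ha
    _ = P a ^ (1 + t) := by rw [Real.rpow_add' hPa (by linarith), Real.rpow_one, mul_comm]

end Threshold

lemma Real.rpow_div_one_add_mul_rpow_one_div_one_add {n K s : ℝ} (hn : 0 < n) (hK : 0 ≤ K)
    (hs : 0 ≤ s) : n ^ (s / (1 + s)) * K ^ (1 / (1 + s)) = n * (K / n) ^ (1 / (1 + s)) := by
  have hsplit : K ^ (1 / (1 + s)) = n ^ (1 / (1 + s)) * (K / n) ^ (1 / (1 + s)) := by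
    rw [← Real.mul_rpow hn.le (by positivity), mul_div_cancel₀ K hn.ne']
  rw [hsplit, ← mul_assoc, ← Real.rpow_add hn, ← add_div, add_comm, div_self (by positivity),
    Real.rpow_one]

theorem expected_pushforwardL1Dev_le_three_mul {A β Ω : Type*} [Fintype A] [Fintype β]
    [DecidableEq β] [Fintype Ω] {μ : Ω → ℝ} (hμ0 : ∀ ω, 0 ≤ μ ω) (hμ1 : ∑ ω, μ ω = 1)
    {f : Ω → A → β}
    (huniv : ∀ a a' : A, a ≠ a' → ∑ ω with f ω a = f ω a', μ ω ≤ 1 / Fintype.card β)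
    {P : A → ℝ} (hP : ∀ a, 0 ≤ P a) {t T : ℝ} (ht0 : 0 ≤ t) (ht1 : t ≤ 1) (hT : 0 < T)
    (hPT : ∑ a, P a ^ (1 + t) = Fintype.card β * T ^ (1 + t)) :
    ∑ ω, μ ω * pushforwardL1Dev (f ω) P univ ≤ 3 * (Fintype.card β * T) := by
  set n : ℝ := (Fintype.card β : ℝ)
  have hPpow : ∀ a, 0 ≤ P a ^ (1 + t) := fun a => Real.rpow_nonneg (hP a) _
  have hlight : ∑ a with P a ≤ T, P a ^ 2 ≤ n * T ^ 2 :=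
    calc ∑ a with P a ≤ T, P a ^ 2 ≤ T ^ (1 - t) * ∑ a with P a ≤ T, P a ^ (1 + t) :=
          sum_sq_le_rpow_mul_sum_rpow (fun a _ => hP a) (fun a ha => (mem_filter.1 ha).2) ht1
      _ ≤ T ^ (1 - t) * (n * T ^ (1 + t)) := by
          rw [← hPT]
          exact mul_le_mul_of_nonneg_left (sum_le_univ_sum_of_nonneg hPpow) (by positivity)
      _ = n * T ^ 2 := by
          rw [mul_left_comm, ← Real.rpow_add' hT.le (by ring_nf; norm_num)]
          norm_num
  have hheavy : ∑ a with ¬ P a ≤ T, P a ≤ n * T := by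
    refine le_of_mul_le_mul_left ?_ (Real.rpow_pos_of_pos hT t)
    calc T ^ t * ∑ a with ¬ P a ≤ T, P a ≤ ∑ a with ¬ P a ≤ T, P a ^ (1 + t) :=
          rpow_mul_sum_le_sum_rpow hT.le (fun a ha => (not_le.1 (mem_filter.1 ha).2).le) ht0
      _ ≤ n * T ^ (1 + t) := hPT ▸ sum_le_univ_sum_of_nonneg hPpow
      _ = T ^ t * (n * T) := by
          rw [Real.rpow_add' hT.le (by linarith), Real.rpow_one]
          ring
  calc _ ≤ √(n * ∑ a with P a ≤ T, P a ^ 2) + 2 * ∑ a with ¬ P a ≤ T, P a :=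
        expected_pushforwardL1Dev_le hμ0 hμ1 huniv (fun a _ => hP a) (P · ≤ T)
    _ ≤ √(n * (n * T ^ 2)) + 2 * (n * T) := by gcongr
    _ = 3 * (n * T) := by
        rw [show n * (n * T ^ 2) = (n * T) ^ 2 by ring, Real.sqrt_sq (by positivity)]
        ring

theorem stmt_2_general {A : Type*} [Fintype A] (M : ℕ) (hM : 0 < M)
    (P : A → ℝ) (hP0 : ∀ a, 0 ≤ P a)
    {Ω : Type*} [Fintype Ω] (μ : Ω → ℝ) (hμ0 : ∀ ω, 0 ≤ μ ω) (hμ1 : ∑ ω, μ ω = 1)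
    (f : Ω → A → Fin M)
    (huniv : ∀ a a' : A, a ≠ a' →
      ∑ ω ∈ univ.filter (fun ω => f ω a = f ω a'), μ ω ≤ 1 / M)
    (s : ℝ) (hs0 : 0 ≤ s) (hs1 : s ≤ 1) :
    ∑ ω, μ ω * (∑ m : Fin M,
        |(∑ a ∈ univ.filter (fun a => f ω a = m), P a) - (∑ a, P a) / M|)
      ≤ 3 * (M : ℝ) ^ (s / (1 + s)) * (∑ a, P a ^ (1 + s)) ^ (1 / (1 + s)) := by
  set K := ∑ a, P a ^ (1 + s)
  have hMpos : (0 : ℝ) < M := by exact_mod_cast hM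
  obtain hK | hK := (sum_nonneg fun a _ => Real.rpow_nonneg (hP0 a) _ : 0 ≤ K).eq_or_lt
  · have hP : ∀ a, P a = 0 := fun a => (Real.rpow_eq_zero (hP0 a) (by linarith)).1 <|
      (sum_eq_zero_iff_of_nonneg fun a _ => Real.rpow_nonneg (hP0 a) _).1 hK.symm a (mem_univ a)
    simp only [hP, sum_const_zero, zero_div, sub_zero, abs_zero, mul_zero]
    positivity
  set T := (K / M) ^ (1 / (1 + s)) with hT_def
  have hKT : K = M * T ^ (1 + s) := by
    rw [hT_def, one_div, Real.rpow_inv_rpow (by positivity) (by linarith)]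
    field_simp
  have hbound := expected_pushforwardL1Dev_le_three_mul hμ0 hμ1 (f := f)
    (by simpa only [Fintype.card_fin] using huniv) hP0 hs0 hs1
    (Real.rpow_pos_of_pos (div_pos hK hMpos) _) (by rwa [Fintype.card_fin])
  simp only [pushforwardL1Dev, Fintype.card_fin] at hbound
  rwa [mul_assoc, Real.rpow_div_one_add_mul_rpow_one_div_one_add hMpos hK.le hs0]

/-- **Main theorem.** For a sub-distribution `P` on a finite set `A`, a universal₂
ensemble of hash functions `f : Ω → A → Fin M`, and every `s ∈ [0,1]`, the expected
`L¹` distance of the pushforward to the rescaled uniform distribution is at most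
`3 · M^{s/(1+s)} · (∑ a, P a ^ (1+s))^{1/(1+s)} = 3 M^{s/(1+s)} e^{-H̃_{1+s}(A|P)/(1+s)}`. -/
theorem stmt_2 {A : Type*} [Fintype A] (M : ℕ) (hM : 0 < M)
    (P : A → ℝ) (hP0 : ∀ a, 0 ≤ P a) (hP1 : ∑ a, P a ≤ 1)
    {Ω : Type*} [Fintype Ω] (μ : Ω → ℝ) (hμ0 : ∀ ω, 0 ≤ μ ω) (hμ1 : ∑ ω, μ ω = 1)
    (f : Ω → A → Fin M)
    (huniv : ∀ a a' : A, a ≠ a' →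
      ∑ ω ∈ univ.filter (fun ω => f ω a = f ω a'), μ ω ≤ 1 / M)
    (s : ℝ) (hs0 : 0 ≤ s) (hs1 : s ≤ 1) :
    ∑ ω, μ ω * (∑ m : Fin M,
        |(∑ a ∈ univ.filter (fun a => f ω a = m), P a) - (∑ a, P a) / M|)
      ≤ 3 * (M : ℝ) ^ (s / (1 + s)) * (∑ a, P a ^ (1 + s)) ^ (1 / (1 + s)) :=
  stmt_2_general M hM P hP0 μ hμ0 hμ1 f huniv s hs0 hs1
end

section
/- Let P be a probability distribution on a finite set A with all values positive, and let R ≥ R_c := 2H'₂(A|P) − H₂(A|P), where H'₂(A|P) := (Σ_{a} P(a)²(−log P(a)))/(Σ_{a} P(a)²) and H₂(A|P) := −log Σ_a P(a)². Then max_{0≤s≤1} (H̃_{1+s}(A|P) − sR)/(1+s) = max_{0≤s≤1} s(H_{1+s}(A|P) − R)/(1+s) = min{ D(Q‖P) : Q a probability distribution on A with H(Q) ≤ R }, where H(Q) := −Σ_a Q(a) log Q(a) and D(Q‖P) := Σ_a Q(a)(log Q(a) − log P(a)). -/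
open Finset

lemma gibbs_aux {A : Type*} [Fintype A] (Q w : A → ℝ) (hQ0 : ∀ a, 0 ≤ Q a)
    (hQ1 : ∑ a, Q a = 1) (hw : ∀ a, 0 < w a) :
    -Real.log (∑ a, w a) ≤ ∑ a, (Q a * Real.log (Q a) - Q a * Real.log (w a)) := by
  classical
  set t : Finset A := univ.filter (fun a => Q a ≠ 0) with ht
  have htQ : ∀ a ∈ t, 0 < Q a := fun a ha =>
    lt_of_le_of_ne (hQ0 a) (Ne.symm (by simpa [ht] using ha))
  have htsum : ∑ a ∈ t, Q a = 1 := by rw [ht, Finset.sum_filter_ne_zero, hQ1]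
  have htne : t.Nonempty := Finset.nonempty_of_sum_ne_zero (by rw [htsum]; norm_num)
  have hj := (strictConcaveOn_log_Ioi.concaveOn).le_map_sum
    (fun a ha => (htQ a ha).le) htsum
    (fun a ha => Set.mem_Ioi.mpr (div_pos (hw a) (htQ a ha)))
    (p := fun a => w a / Q a)
  simp only [smul_eq_mul] at hj
  have h2 : ∑ a ∈ t, Q a * (w a / Q a) = ∑ a ∈ t, w a :=
    Finset.sum_congr rfl fun a ha => by
      rw [mul_comm, div_mul_cancel₀ _ (htQ a ha).ne']
  have h3 : ∑ a ∈ t, w a ≤ ∑ a, w a :=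
    Finset.sum_le_sum_of_subset_of_nonneg (Finset.filter_subset _ _) (fun a _ _ => (hw a).le)
  have h4 : 0 < ∑ a ∈ t, w a := Finset.sum_pos (fun a ha => hw a) htne
  have h5 : Real.log (∑ a ∈ t, w a) ≤ Real.log (∑ a, w a) := Real.log_le_log h4 h3
  have h6 : ∑ a ∈ t, Q a * Real.log (w a / Q a)
      = -∑ a ∈ t, (Q a * Real.log (Q a) - Q a * Real.log (w a)) := by
    rw [← Finset.sum_neg_distrib]
    exact Finset.sum_congr rfl fun a ha => by
      rw [Real.log_div (hw a).ne' (htQ a ha).ne']; ring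
  have h7 : ∑ a, (Q a * Real.log (Q a) - Q a * Real.log (w a))
      = ∑ a ∈ t, (Q a * Real.log (Q a) - Q a * Real.log (w a)) := by
    refine (Finset.sum_subset (Finset.filter_subset _ _) ?_).symm
    intro a _ ha
    have : Q a = 0 := by simpa [ht] using ha
    simp [this]
  rw [h2] at hj
  rw [h6] at hj
  rw [h7]
  linarith

/-- For a probability distribution `P` with full support and a rate `R` at least the
critical rate `R_c = 2H'₂(A|P) - H₂(A|P)`, the exponent
`max_{0≤s≤1} (H̃_{1+s}(A|P) - sR)/(1+s)` equals `max_{0≤s≤1} s(H_{1+s}(A|P) - R)/(1+s)`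
(with `H_1` the Shannon entropy by continuity) and also equals
`min { D(Q‖P) : Q a probability distribution on A with H(Q) ≤ R }`. -/
theorem stmt_6 {A : Type*} [Fintype A]
    (P : A → ℝ) (hP0 : ∀ a, 0 < P a) (hP1 : ∑ a, P a = 1)
    (R : ℝ)
    (hR : 2 * ((∑ a, P a ^ 2 * (-Real.log (P a))) / (∑ a, P a ^ 2))
        - (-Real.log (∑ a, P a ^ 2)) ≤ R) :
    sSup ((fun s : ℝ => (-Real.log (∑ a, P a ^ (1 + s)) - s * R) / (1 + s)) ''
        Set.Icc 0 1)
      = sSup ((fun s : ℝ =>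
          s * ((if s = 0 then ∑ a, Real.negMulLog (P a)
                else (-Real.log (∑ a, P a ^ (1 + s))) / s) - R) / (1 + s)) ''
        Set.Icc 0 1)
    ∧
    sSup ((fun s : ℝ => (-Real.log (∑ a, P a ^ (1 + s)) - s * R) / (1 + s)) ''
        Set.Icc 0 1)
      = sInf {x : ℝ | ∃ Q : A → ℝ, (∀ a, 0 ≤ Q a) ∧ (∑ a, Q a = 1) ∧
          (∑ a, Real.negMulLog (Q a)) ≤ R ∧
          x = ∑ a, Q a * (Real.log (Q a) - Real.log (P a))} := by
  classical
  have hne : (univ : Finset A).Nonempty := by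
    by_contra h
    rw [Finset.not_nonempty_iff_eq_empty] at h
    rw [h, Finset.sum_empty] at hP1
    norm_num at hP1
  set F : ℝ → ℝ := fun s : ℝ => (-Real.log (∑ a, P a ^ (1 + s)) - s * R) / (1 + s) with hF
  set T : Set ℝ := {x : ℝ | ∃ Q : A → ℝ, (∀ a, 0 ≤ Q a) ∧ (∑ a, Q a = 1) ∧
      (∑ a, Real.negMulLog (Q a)) ≤ R ∧
      x = ∑ a, Q a * (Real.log (Q a) - Real.log (P a))} with hT
  -- Z and its positivity
  set Z : ℝ → ℝ := fun s => ∑ a, P a ^ (1 + s) with hZ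
  have hZpos : ∀ s, 0 < Z s := fun s =>
    Finset.sum_pos (fun a _ => Real.rpow_pos_of_pos (hP0 a) _) hne
  -- value at 0
  have hZ0 : Z 0 = 1 := by
    simp only [hZ, add_zero, Real.rpow_one]
    exact hP1
  have hF0 : F 0 = 0 := by
    simp only [hF, zero_mul]
    rw [show ∑ a, P a ^ (1 + (0:ℝ)) = Z 0 from rfl, hZ0]
    simp
  -- Part 1 : the two functions coincide on [0,1]
  have part1 : sSup (F '' Set.Icc 0 1)
      = sSup ((fun s : ℝ =>
          s * ((if s = 0 then ∑ a, Real.negMulLog (P a)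
                else (-Real.log (∑ a, P a ^ (1 + s))) / s) - R) / (1 + s)) ''
        Set.Icc 0 1) := by
    congr 1
    refine Set.image_congr fun s hs => ?_
    by_cases h0 : s = 0
    · subst h0
      rw [hF0]
      simp
    · have hs1 : (1:ℝ) + s ≠ 0 := by
        have := hs.1
        intro h
        have : s = -1 := by linarith
        simp [this] at hs
        linarith [hs]
      simp only [hF, if_neg h0]
      field_simp
  -- weak duality
  have key : ∀ s ∈ Set.Icc (0:ℝ) 1, ∀ Q : A → ℝ, (∀ a, 0 ≤ Q a) → (∑ a, Q a = 1) →
      (∑ a, Real.negMulLog (Q a)) ≤ R →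
      F s ≤ ∑ a, Q a * (Real.log (Q a) - Real.log (P a)) := by
    intro s hs Q hQ0 hQ1 hQH
    have hs0 : 0 ≤ s := hs.1
    have h1s : (0:ℝ) < 1 + s := by linarith
    have hg := gibbs_aux Q (fun a => P a ^ (1 + s)) hQ0 hQ1
      (fun a => Real.rpow_pos_of_pos (hP0 a) _)
    have hlw : ∀ a, Real.log (P a ^ (1 + s)) = (1 + s) * Real.log (P a) :=
      fun a => Real.log_rpow (hP0 a) _
    have hg' : -Real.log (Z s)
        ≤ ∑ a, Q a * Real.log (Q a) - (1 + s) * ∑ a, Q a * Real.log (P a) := by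
      rw [Finset.mul_sum, ← Finset.sum_sub_distrib]
      refine le_trans hg (le_of_eq (Finset.sum_congr rfl fun a _ => ?_))
      rw [hlw a]; ring
    have hH : -∑ a, Q a * Real.log (Q a) ≤ R := by
      have : ∑ a, Real.negMulLog (Q a) = -∑ a, Q a * Real.log (Q a) := by
        rw [← Finset.sum_neg_distrib]
        exact Finset.sum_congr rfl fun a _ => by simp [Real.negMulLog]
      linarith [hQH, this ▸ hQH]
    have hD : ∑ a, Q a * (Real.log (Q a) - Real.log (P a))
        = ∑ a, Q a * Real.log (Q a) - ∑ a, Q a * Real.log (P a) := by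
      rw [← Finset.sum_sub_distrib]
      exact Finset.sum_congr rfl fun a _ => by ring
    rw [hD, hF]
    rw [div_le_iff₀ h1s]
    have hsH : s * (-∑ a, Q a * Real.log (Q a)) ≤ s * R :=
      mul_le_mul_of_nonneg_left hH hs0
    have : -Real.log (∑ a, P a ^ (1 + s)) = -Real.log (Z s) := rfl
    nlinarith [hg', hsH]
  -- the main witness : ∃ s* ∈ [0,1] and Q* feasible with D(Q*||P) = F s*
  have main : ∃ s' ∈ Set.Icc (0:ℝ) 1, ∃ Q : A → ℝ, (∀ a, 0 ≤ Q a) ∧ (∑ a, Q a = 1) ∧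
      (∑ a, Real.negMulLog (Q a)) ≤ R ∧
      (∑ a, Q a * (Real.log (Q a) - Real.log (P a))) = F s' := by
    by_cases hc : (∑ a, Real.negMulLog (P a)) ≤ R
    · refine ⟨0, by simp, P, fun a => (hP0 a).le, hP1, hc, ?_⟩
      rw [hF0]
      simp
    · -- tilted family and IVT
      push_neg at hc
      set L : ℝ → ℝ := fun s => ∑ a, P a ^ (1 + s) * Real.log (P a) with hL
      set φ : ℝ → ℝ := fun s => -(1 + s) * (L s / Z s) + Real.log (Z s) with hφ
      have hrw : ∀ s : ℝ, ∀ a : A, P a ^ (1 + s) = Real.exp (Real.log (P a) * (1 + s)) :=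
        fun s a => Real.rpow_def_of_pos (hP0 a) _
      have hZc : Continuous Z := by
        have : Z = fun s => ∑ a, Real.exp (Real.log (P a) * (1 + s)) :=
          funext fun s => Finset.sum_congr rfl fun a _ => hrw s a
        rw [this]
        exact continuous_finset_sum _ fun a _ =>
          Real.continuous_exp.comp (continuous_const.mul (continuous_const.add continuous_id))
      have hLc : Continuous L := by
        have : L = fun s => ∑ a, Real.exp (Real.log (P a) * (1 + s)) * Real.log (P a) :=
          funext fun s => Finset.sum_congr rfl fun a _ => by rw [hrw s a]
        rw [this]
        exact continuous_finset_sum _ fun a _ =>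
          (Real.continuous_exp.comp (continuous_const.mul (continuous_const.add continuous_id))).mul continuous_const
      have hφc : Continuous φ := by
        refine Continuous.add ?_ (hZc.log fun s => (hZpos s).ne')
        exact ((continuous_const.add continuous_id).neg).mul
          (hLc.div hZc fun s => (hZpos s).ne')
      -- endpoint values
      have hnml : ∑ a, Real.negMulLog (P a) = -∑ a, P a * Real.log (P a) := by
        rw [← Finset.sum_neg_distrib]
        exact Finset.sum_congr rfl fun a _ => by simp [Real.negMulLog]
      have hφ0 : φ 0 = ∑ a, Real.negMulLog (P a) := by
        have hL0 : L 0 = ∑ a, P a * Real.log (P a) := by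
          simp only [hL, add_zero, Real.rpow_one]
        simp only [hφ, hL0, hZ0, Real.log_one, div_one]
        rw [hnml]
        ring
      have h2cast : ∀ a : A, P a ^ (1 + (1:ℝ)) = P a ^ 2 := by
        intro a
        rw [show (1:ℝ) + 1 = ((2:ℕ):ℝ) by norm_num, Real.rpow_natCast]
      have hφ1 : φ 1 ≤ R := by
        have hZ1 : Z 1 = ∑ a, P a ^ 2 :=
          Finset.sum_congr rfl fun a _ => h2cast a
        have hL1 : L 1 = ∑ a, P a ^ 2 * Real.log (P a) :=
          Finset.sum_congr rfl fun a _ => by rw [h2cast a]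
        have hneg : (∑ a, P a ^ 2 * (-Real.log (P a))) = -L 1 := by
          rw [hL1, ← Finset.sum_neg_distrib]
          exact Finset.sum_congr rfl fun a _ => by ring
        have : φ 1 = 2 * ((∑ a, P a ^ 2 * (-Real.log (P a))) / (∑ a, P a ^ 2))
            - (-Real.log (∑ a, P a ^ 2)) := by
          simp only [hφ, hneg, hZ1]
          ring
        linarith [hR, this ▸ hR]
      -- IVT
      have hi : R ∈ Set.Icc (φ 1) (φ 0) := ⟨hφ1, by rw [hφ0]; exact hc.le⟩
      obtain ⟨s, hs, hφs⟩ := intermediate_value_Icc' (by norm_num : (0:ℝ) ≤ 1)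
        (hφc.continuousOn) hi
      have hs0 : 0 ≤ s := hs.1
      have h1s : (0:ℝ) < 1 + s := by linarith
      refine ⟨s, hs, fun a => P a ^ (1 + s) / Z s, ?_, ?_, ?_, ?_⟩
      · exact fun a => div_nonneg (Real.rpow_pos_of_pos (hP0 a) _).le (hZpos s).le
      · rw [← Finset.sum_div, div_self (hZpos s).ne']
      · -- entropy of Q* equals φ s = R
        have hlog : ∀ a : A, Real.log (P a ^ (1 + s) / Z s)
            = (1 + s) * Real.log (P a) - Real.log (Z s) := fun a => by
          rw [Real.log_div (Real.rpow_pos_of_pos (hP0 a) _).ne' (hZpos s).ne',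
            Real.log_rpow (hP0 a)]
        have : ∑ a, Real.negMulLog (P a ^ (1 + s) / Z s) = φ s := by
          have hterm : ∀ a : A, Real.negMulLog (P a ^ (1 + s) / Z s)
              = (-(1 + s) / Z s) * (P a ^ (1 + s) * Real.log (P a))
                + (P a ^ (1 + s) / Z s) * Real.log (Z s) := fun a => by
            simp only [Real.negMulLog, hlog a]
            field_simp
            ring
          rw [Finset.sum_congr rfl fun a _ => hterm a, Finset.sum_add_distrib,
            ← Finset.mul_sum, ← Finset.sum_mul, ← Finset.sum_div,
            show (∑ a, P a ^ (1 + s)) = Z s from rfl, div_self (hZpos s).ne', one_mul]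
          simp only [hφ, hL]
          ring
        rw [this, hφs]
      · -- D(Q*||P) = F s
        have hlog : ∀ a : A, Real.log (P a ^ (1 + s) / Z s)
            = (1 + s) * Real.log (P a) - Real.log (Z s) := fun a => by
          rw [Real.log_div (Real.rpow_pos_of_pos (hP0 a) _).ne' (hZpos s).ne',
            Real.log_rpow (hP0 a)]
        have hD : ∑ a, (P a ^ (1 + s) / Z s) *
            (Real.log (P a ^ (1 + s) / Z s) - Real.log (P a))
            = s * (L s / Z s) - Real.log (Z s) := by
          have hterm : ∀ a : A, (P a ^ (1 + s) / Z s) *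
              (Real.log (P a ^ (1 + s) / Z s) - Real.log (P a))
              = (s / Z s) * (P a ^ (1 + s) * Real.log (P a))
                - (P a ^ (1 + s) / Z s) * Real.log (Z s) := fun a => by
            rw [hlog a]; field_simp; ring
          rw [Finset.sum_congr rfl fun a _ => hterm a, Finset.sum_sub_distrib,
            ← Finset.mul_sum, ← Finset.sum_mul, ← Finset.sum_div,
            show (∑ a, P a ^ (1 + s)) = Z s from rfl, div_self (hZpos s).ne', one_mul]
          simp only [hL]
          ring
        rw [hD]
        have hRval : R = -(1 + s) * (L s / Z s) + Real.log (Z s) := by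
          rw [← hφs]
        show s * (L s / Z s) - Real.log (Z s) = (-Real.log (Z s) - s * R) / (1 + s)
        rw [hRval]
        field_simp
        ring
  -- assemble part 2
  obtain ⟨s', hs', Q', hQ'0, hQ'1, hQ'H, hQ'D⟩ := main
  have hxT : (∑ a, Q' a * (Real.log (Q' a) - Real.log (P a))) ∈ T :=
    ⟨Q', hQ'0, hQ'1, hQ'H, rfl⟩
  have hSne : (F '' Set.Icc 0 1).Nonempty := ⟨F 0, 0, by simp, rfl⟩
  have hTne : T.Nonempty := ⟨_, hxT⟩
  have hle : ∀ x ∈ F '' Set.Icc 0 1, ∀ y ∈ T, x ≤ y := by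
    rintro x ⟨s, hs, rfl⟩ y ⟨Q, hQ0, hQ1, hQH, rfl⟩
    exact key s hs Q hQ0 hQ1 hQH
  have hbddS : BddAbove (F '' Set.Icc 0 1) :=
    ⟨_, fun x hx => hle x hx _ hxT⟩
  have hbddT : BddBelow T :=
    ⟨F 0, fun y hy => hle (F 0) ⟨0, by simp, rfl⟩ y hy⟩
  have h1 : sSup (F '' Set.Icc 0 1) ≤ sInf T :=
    csSup_le hSne fun x hx => le_csInf hTne fun y hy => hle x hx y hy
  have h2 : sInf T ≤ sSup (F '' Set.Icc 0 1) := by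
    calc sInf T ≤ ∑ a, Q' a * (Real.log (Q' a) - Real.log (P a)) := csInf_le hbddT hxT
    _ = F s' := hQ'D
    _ ≤ sSup (F '' Set.Icc 0 1) := le_csSup hbddS ⟨s', hs', rfl⟩
  exact ⟨part1, le_antisymm h1 h2⟩
end

section
/- Let P be a probability distribution on a finite set A, M a positive integer, and f any function from A to {1,…,M}. Then d₁(P^{f(A)}) ≥ P{ a ∈ A : P(a) ≥ 2/M }, i.e. Σ_{m=1}^M |P(f⁻¹{m}) − 1/M| ≥ Σ_{a: P(a) ≥ 2/M} P(a). -/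
/-!
Split the mass of the heavy atoms `{a | 2/M ≤ P a}` along the fibres of `f`. A fibre either
contains no heavy atom, or its heavy mass `g` is at least `2/M`, so the fibre mass `Q ≥ g`
exceeds `1/M` by at least `g/2`. In both cases `g ≤ |Q - 1/M| + (Q - 1/M)`, and summing over the
fibres gives the claim because the deviations `Q - 1/M` sum to zero.
-/

open Finset

theorem Finset.sum_eq_zero_or_le_sum {ι : Type*} {s : Finset ι} {w : ι → ℝ} {t : ℝ}
    (hw : ∀ i ∈ s, 0 ≤ w i) (ht : ∀ i ∈ s, t ≤ w i) :
    ∑ i ∈ s, w i = 0 ∨ t ≤ ∑ i ∈ s, w i := by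
  rcases s.eq_empty_or_nonempty with rfl | ⟨i, hi⟩
  · exact Or.inl sum_empty
  · exact Or.inr ((ht i hi).trans (single_le_sum hw hi))

theorem le_abs_sub_add_sub {g q c : ℝ} (hg : g = 0 ∨ 2 * c ≤ g) (hgq : g ≤ q) :
    g ≤ |q - c| + (q - c) := by
  rcases hg with rfl | hg
  · linarith [neg_abs_le (q - c)]
  · linarith [le_abs_self (q - c)]

theorem sum_sub_one_div_eq_zero {M : ℕ} (hM : 0 < M) {Q : Fin M → ℝ} (hQ : ∑ m, Q m = 1) :
    ∑ m, (Q m - 1 / M) = 0 := by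
  rw [sum_sub_distrib, hQ, sum_const, card_univ, Fintype.card_fin, nsmul_eq_mul,
    mul_one_div_cancel (by exact_mod_cast hM.ne'), sub_self]

/-- For any probability distribution `P` on a finite set `A` and any function
`f : A → Fin M`, the `L¹` distance of the pushforward from the uniform distribution is at
least the mass of the set where `P a ≥ 2/M`. -/
theorem stmt_10 {A : Type*} [Fintype A] (M : ℕ) (hM : 0 < M)
    (P : A → ℝ) (hP0 : ∀ a, 0 ≤ P a) (hP1 : ∑ a, P a = 1)
    (f : A → Fin M) :
    ∑ a ∈ univ.filter (fun a => 2 / (M : ℝ) ≤ P a), P a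
      ≤ ∑ m : Fin M, |(∑ a ∈ univ.filter (fun a => f a = m), P a) - 1 / M| := by
  set Q : Fin M → ℝ := fun m => ∑ a ∈ univ.filter (fun a => f a = m), P a
  set heavy := univ.filter (fun a => 2 / (M : ℝ) ≤ P a)
  have hfibre (m : Fin M) :
      ∑ a ∈ heavy with f a = m, P a ≤ |Q m - 1 / M| + (Q m - 1 / M) := by
    refine le_abs_sub_add_sub ?_ ?_
    · rw [mul_one_div]
      exact sum_eq_zero_or_le_sum (fun a _ => hP0 a)
        fun a ha => (mem_filter.1 (mem_filter.1 ha).1).2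
    · exact sum_le_sum_of_subset_of_nonneg (filter_subset_filter _ (subset_univ _))
        fun a _ _ => hP0 a
  have hQ : ∑ m, Q m = 1 := (sum_fiberwise univ f P).trans hP1
  calc ∑ a ∈ heavy, P a
    _ = ∑ m, ∑ a ∈ heavy with f a = m, P a := (sum_fiberwise heavy f P).symm
    _ ≤ ∑ m, (|Q m - 1 / M| + (Q m - 1 / M)) := sum_le_sum fun m _ => hfibre m
    _ = ∑ m, |Q m - 1 / M| := by rw [sum_add_distrib, sum_sub_one_div_eq_zero hM hQ, add_zero]
end

section
/- Let P be a probability distribution on a finite set A and, for each n, let M_n be a positive integer. Then there exists a function f_n: Aⁿ → {1,…,M_n} such that d₁((Pⁿ)^{f_n(Aⁿ)}) ≤ 2·Pⁿ{ aⁿ : Pⁿ(aⁿ) ≥ 1/M_n } + 2·Σ_{Q ∈ T_n} M_n · Pⁿ(T(Q)) · e^{−n(D(Q‖P) + H(Q))} + 2|T_n|/M_n, where Pⁿ is the n-fold i.i.d. product of P. -/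
/-!
Order `Aⁿ` so that every type class is an interval, and lay the light sequences (those of
probability `< 1/M`) end to end on `[0, 1]` in this order. Put each sequence into the cell
`[m/M, (m+1)/M)` containing the light mass preceding it. The light part of a cell then exceeds
`1/M` by at most the mass of the one light sequence straddling the right end of the cell, so `d₁`
is at most twice the heavy mass plus twice the total straddling mass. A type class `T(Q)` covers
an interval of length at most `Pⁿ(T(Q))`, so it straddles at most `M · Pⁿ(T(Q)) + 1` cell ends,
each time with a sequence of probability at most `min (e^{-n(D(Q‖P)+H(Q))}) (1/M)`.
-/

open Finset
open scoped Classical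

/-- The empirical distribution (type) of a sequence `aa : Fin n → A`. -/
noncomputable def empDist {A : Type*} [Fintype A] (n : ℕ) (aa : Fin n → A) : A → ℝ :=
  fun a => ((univ.filter (fun i : Fin n => aa i = a)).card : ℝ) / n

/-- The set `T_n` of all types of length `n` on `A`. -/
noncomputable def typeSet (A : Type*) [Fintype A] (n : ℕ) : Finset (A → ℝ) :=
  Finset.image (empDist n) univ

/-- Shannon entropy of a distribution. -/
noncomputable def shEnt {A : Type*} [Fintype A] (Q : A → ℝ) : ℝ :=
  ∑ a, Real.negMulLog (Q a)

/-- Kullback–Leibler divergence `D(Q‖P)`. -/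
noncomputable def klDiv' {A : Type*} [Fintype A] (Q P : A → ℝ) : ℝ :=
  ∑ a, Q a * (Real.log (Q a) - Real.log (P a))

lemma sum_abs_sub_eq_two_mul_sum_max {ι : Type*} (s : Finset ι) {a b : ι → ℝ}
    (h : ∑ i ∈ s, a i = ∑ i ∈ s, b i) :
    ∑ i ∈ s, |a i - b i| = 2 * ∑ i ∈ s, max (a i - b i) 0 := by
  have habs (x : ℝ) : |x| = 2 * max x 0 - x := by
    rcases le_total x 0 with hx | hx
    · rw [abs_of_nonpos hx, max_eq_right hx]; ring
    · rw [abs_of_nonneg hx, max_eq_left hx]; ring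
  rw [sum_congr rfl fun i _ => habs _, sum_sub_distrib, ← mul_sum, sum_sub_distrib, h]
  ring

section Binning

variable {X : Type*} [LinearOrder X] (p : X → ℝ) (S : Finset X)

noncomputable def cumMass (x : X) : ℝ := ∑ y ∈ S with y < x, p y

noncomputable def crossing (θ : ℝ) : Finset X :=
  {w ∈ S | cumMass p S w < θ ∧ θ ≤ cumMass p S w + p w}

noncomputable def bin (M : ℕ) (x : X) : ℕ := min ⌊M * cumMass p S x⌋₊ (M - 1)

variable {p S}

lemma cumMass_nonneg (hp : ∀ x, 0 ≤ p x) (x : X) : 0 ≤ cumMass p S x :=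
  sum_nonneg fun y _ => hp y

lemma cumMass_mono (hp : ∀ x, 0 ≤ p x) : Monotone (cumMass p S) := fun _ _ hxy =>
  sum_le_sum_of_subset_of_nonneg (monotone_filter_right _ fun _ _ hy => hy.trans_le hxy)
    fun y _ _ => hp y

lemma cumMass_add_self {w : X} (hw : w ∈ S) :
    cumMass p S w + p w = ∑ y ∈ S with y ≤ w, p y := by
  have hsplit : ({y ∈ S | y ≤ w} : Finset X) = insert w {y ∈ S | y < w} := by
    ext y
    simp only [mem_filter, mem_insert, le_iff_lt_or_eq]
    grind
  rw [hsplit, sum_insert (by simp), cumMass, add_comm]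

lemma cumMass_add_le_of_lt (hp : ∀ x, 0 ≤ p x) {w x : X} (hw : w ∈ S) (hwx : w < x) :
    cumMass p S w + p w ≤ cumMass p S x := by
  rw [cumMass_add_self hw]
  exact sum_le_sum_of_subset_of_nonneg (monotone_filter_right _ fun _ _ hy => hy.trans_lt hwx)
    fun y _ _ => hp y

lemma card_crossing_le_one (hp : ∀ x, 0 ≤ p x) (θ : ℝ) : #(crossing p S θ) ≤ 1 := by
  have key : ∀ w ∈ crossing p S θ, ∀ w' ∈ crossing p S θ, ¬ w < w' := by
    intro w hw w' hw' hlt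
    simp only [crossing, mem_filter] at hw hw'
    linarith [cumMass_add_le_of_lt hp hw.1 hlt]
  exact card_le_one.mpr fun w hw w' hw' =>
    le_antisymm (not_lt.mp (key w' hw' w hw)) (not_lt.mp (key w hw w' hw'))

lemma min_le_sum_cumMass_lt (hp : ∀ x, 0 ≤ p x) (θ : ℝ) :
    min θ (∑ y ∈ S, p y) ≤ ∑ y ∈ S with cumMass p S y < θ, p y := by
  by_cases hall : ∀ y ∈ S, cumMass p S y < θ
  · rw [filter_true_of_mem hall]
    exact min_le_right _ _
  push Not at hall
  obtain ⟨z, hz, hzmin⟩ := exists_min_image {y ∈ S | θ ≤ cumMass p S y} id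
    (by simpa [Finset.Nonempty] using hall)
  rw [mem_filter] at hz
  have hbelow : ({y ∈ S | cumMass p S y < θ} : Finset X) = {y ∈ S | y < z} := by
    refine filter_congr fun y hy => ⟨fun hyθ => ?_, fun hyz => ?_⟩
    · by_contra! hzy
      linarith [cumMass_mono (S := S) hp hzy]
    · by_contra! hθy
      exact (hzmin y (mem_filter.mpr ⟨hy, hθy⟩)).not_gt hyz
  rw [hbelow]
  exact (min_le_left _ _).trans hz.2

lemma sum_cumMass_lt_le (hp : ∀ x, 0 ≤ p x) {θ : ℝ} (hθ : 0 ≤ θ) :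
    ∑ y ∈ S with cumMass p S y < θ, p y ≤ θ + ∑ w ∈ crossing p S θ, p w := by
  have hcross : 0 ≤ ∑ w ∈ crossing p S θ, p w := sum_nonneg fun w _ => hp w
  rcases ({y ∈ S | cumMass p S y < θ} : Finset X).eq_empty_or_nonempty with hemp | hne
  · rw [hemp, sum_empty]
    linarith
  obtain ⟨w, hw, hwmax⟩ := exists_max_image _ id hne
  rw [mem_filter] at hw
  have hbelow : ({y ∈ S | cumMass p S y < θ} : Finset X) = {y ∈ S | y ≤ w} :=
    filter_congr fun y hy => ⟨fun hyθ => hwmax y (mem_filter.mpr ⟨hy, hyθ⟩),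
      fun hyw => (cumMass_mono hp hyw).trans_lt hw.2⟩
  rw [hbelow, ← cumMass_add_self hw.1]
  by_cases hθw : θ ≤ cumMass p S w + p w
  · have hwc : w ∈ crossing p S θ := mem_filter.mpr ⟨hw.1, hw.2, hθw⟩
    linarith [single_le_sum (fun w _ => hp w) hwc, hw.2]
  · linarith

lemma bin_lt {M : ℕ} (hM : 0 < M) (x : X) : bin p S M x < M :=
  (min_le_right _ _).trans_lt (Nat.sub_lt hM one_pos)

lemma bin_lt_iff (hp : ∀ x, 0 ≤ p x) {M j : ℕ} (hj : j < M) (x : X) :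
    bin p S M x < j ↔ cumMass p S x < j / M := by
  have hM : (0 : ℝ) < M := by exact_mod_cast (Nat.zero_le j).trans_lt hj
  rw [bin, min_lt_iff, Nat.floor_lt (mul_nonneg hM.le (cumMass_nonneg hp x)), lt_div_iff₀ hM,
    mul_comm]
  exact or_iff_left (by omega)

lemma sum_bin_eq_le (hp : ∀ x, 0 ≤ p x) (hS : ∑ y ∈ S, p y ≤ 1) {M m : ℕ} (hm : m < M) :
    ∑ y ∈ S with bin p S M y = m, p y
      ≤ 1 / M + ∑ w ∈ crossing p S ((m + 1 : ℕ) / M), p w := by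
  have hM : (0 : ℝ) < M := by exact_mod_cast (Nat.zero_le m).trans_lt hm
  have hcross : 0 ≤ ∑ w ∈ crossing p S ((m + 1 : ℕ) / M), p w := sum_nonneg fun w _ => hp w
  have hsplit : ∑ y ∈ S with bin p S M y < m + 1, p y
      = ∑ y ∈ S with bin p S M y < m, p y + ∑ y ∈ S with bin p S M y = m, p y := by
    rw [← sum_filter_add_sum_filter_not {y ∈ S | bin p S M y < m + 1}
      fun y => bin p S M y < m, filter_filter, filter_filter]
    congr 2 <;> ext y <;> simp only [mem_filter] <;> exact and_congr_right fun _ => by omega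
  have hlow : min ((m : ℝ) / M) (∑ y ∈ S, p y) ≤ ∑ y ∈ S with bin p S M y < m, p y := by
    rw [filter_congr fun y _ => bin_lt_iff hp hm y]
    exact min_le_sum_cumMass_lt hp _
  have htotal : ∑ y ∈ S with bin p S M y < m + 1, p y ≤ ∑ y ∈ S, p y :=
    sum_le_sum_of_subset_of_nonneg (filter_subset _ _) fun y _ _ => hp y
  have hup : ∑ y ∈ S with bin p S M y < m + 1, p y
      ≤ (m + 1) / M + ∑ w ∈ crossing p S ((m + 1 : ℕ) / M), p w := by
    rcases (Nat.succ_le_of_lt hm).lt_or_eq with hm1 | hm1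
    · rw [filter_congr fun y _ => bin_lt_iff hp hm1 y]
      push_cast
      exact sum_cumMass_lt_le hp (by positivity)
    · have : ((m : ℝ) + 1) / M = 1 := by
        rw [div_eq_one_iff_eq hM.ne']
        exact_mod_cast hm1
      linarith
  have hstep : ((m : ℝ) + 1) / M = m / M + 1 / M := by ring
  rcases le_total ((m : ℝ) / M) (∑ y ∈ S, p y) with hmW | hWm
  · rw [min_eq_left hmW] at hlow
    linarith
  · rw [min_eq_right hWm] at hlow
    linarith [one_div_pos.mpr hM]

section OrdConnected

variable {q : X → Prop} [DecidablePred q]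

lemma cumMass_add_le_of_ordConnected (hp : ∀ x, 0 ≤ p x) (hq : {x | q x}.OrdConnected)
    {w₀ w : X} (hw₀ : q w₀) (hw : w ∈ S) (hqw : q w) (hle : w₀ ≤ w) :
    cumMass p S w + p w ≤ cumMass p S w₀ + ∑ y ∈ S with q y, p y := by
  rw [cumMass_add_self hw, ← sum_filter_add_sum_filter_not {y ∈ S | y ≤ w} (· < w₀),
    filter_filter, filter_filter]
  gcongr ?_ + ?_
  · rw [cumMass]
    exact (sum_congr (filter_congr fun y _ =>
      ⟨And.right, fun (hy : y < w₀) => ⟨hy.le.trans hle, hy⟩⟩) fun _ _ => rfl).le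
  · exact sum_le_sum_of_subset_of_nonneg
      (monotone_filter_right _ fun y _ hy => hq.out hw₀ hqw ⟨not_lt.mp hy.2, hy.1⟩)
      fun y _ _ => hp y

lemma card_nonempty_crossing_filter_le (hp : ∀ x, 0 ≤ p x) (hq : {x | q x}.OrdConnected)
    {M : ℕ} (hM : 0 < M) (I : Finset ℕ) :
    (#{m ∈ I | {w ∈ crossing p S ((m + 1 : ℕ) / M) | q w}.Nonempty} : ℝ)
      ≤ M * ∑ y ∈ S with q y, p y + 1 := by
  set mq := ∑ y ∈ S with q y, p y
  have hM' : (0 : ℝ) < M := by exact_mod_cast hM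
  have hmq : 0 ≤ mq := sum_nonneg fun y _ => hp y
  rcases ({y ∈ S | q y} : Finset X).eq_empty_or_nonempty with hemp | hne
  · have : ∀ m, ({w ∈ crossing p S ((m + 1 : ℕ) / M) | q w} : Finset X) = ∅ := fun m => by
      refine eq_empty_of_forall_notMem fun w hw => ?_
      simp only [crossing, mem_filter] at hw
      exact (eq_empty_iff_forall_notMem.mp hemp) w (mem_filter.mpr ⟨hw.1.1, hw.2⟩)
    simp only [this, Finset.not_nonempty_empty, filter_false, card_empty, Nat.cast_zero]
    positivity
  obtain ⟨w₀, hw₀, hw₀min⟩ := exists_min_image _ id hne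
  rw [mem_filter] at hw₀
  set α := cumMass p S w₀
  have hα : 0 ≤ M * α := mul_nonneg hM'.le (cumMass_nonneg hp w₀)
  have hαC : 0 ≤ M * (α + mq) := by rw [mul_add]; exact add_nonneg hα (mul_nonneg hM'.le hmq)
  have hsub : {m ∈ I | {w ∈ crossing p S ((m + 1 : ℕ) / M) | q w}.Nonempty}
      ⊆ (Ico ⌊M * α⌋₊ ⌊M * (α + mq)⌋₊ : Finset ℕ) := by
    intro m hm
    obtain ⟨w, hw⟩ := (mem_filter.mp hm).2
    simp only [crossing, mem_filter] at hw
    obtain ⟨⟨hwS, hlt, hge⟩, hqw⟩ := hw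
    have hlow : α ≤ cumMass p S w :=
      cumMass_mono hp (hw₀min w (mem_filter.mpr ⟨hwS, hqw⟩))
    have hhigh := cumMass_add_le_of_ordConnected hp hq hw₀.2 hwS hqw
      (hw₀min w (mem_filter.mpr ⟨hwS, hqw⟩))
    rw [lt_div_iff₀ hM'] at hlt
    rw [div_le_iff₀ hM'] at hge
    rw [mem_Ico, ← Nat.lt_succ_iff, Nat.floor_lt hα, ← Nat.succ_le_iff, Nat.le_floor_iff hαC]
    push_cast at hlt hge ⊢
    constructor <;> nlinarith
  have hcard := (card_le_card hsub).trans_eq (Nat.card_Ico _ _)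
  have hfloor : ⌊M * α⌋₊ ≤ ⌊M * (α + mq)⌋₊ := Nat.floor_le_floor (by nlinarith)
  have hsum : #{m ∈ I | {w ∈ crossing p S ((m + 1 : ℕ) / M) | q w}.Nonempty} + ⌊M * α⌋₊
      ≤ ⌊M * (α + mq)⌋₊ := by omega
  have hsumR : (#{m ∈ I | {w ∈ crossing p S ((m + 1 : ℕ) / M) | q w}.Nonempty} : ℝ)
      + ⌊M * α⌋₊ ≤ ⌊M * (α + mq)⌋₊ := by exact_mod_cast hsum
  linarith [Nat.floor_le hαC, Nat.lt_floor_add_one (M * α)]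

lemma sum_sum_crossing_filter_le (hp : ∀ x, 0 ≤ p x) (hq : {x | q x}.OrdConnected) {M : ℕ}
    (hM : 0 < M) (I : Finset ℕ) {μ : ℝ} (hμ0 : 0 ≤ μ)
    (hμ : ∀ w ∈ S, q w → p w ≤ μ) :
    ∑ m ∈ I, ∑ w ∈ crossing p S ((m + 1 : ℕ) / M) with q w, p w
      ≤ μ * (M * ∑ y ∈ S with q y, p y + 1) := by
  have hinner (m : ℕ) : ∑ w ∈ crossing p S ((m + 1 : ℕ) / M) with q w, p w ≤ μ := by
    have hcard : (#{w ∈ crossing p S ((m + 1 : ℕ) / M) | q w} : ℝ) ≤ 1 := by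
      exact_mod_cast (card_filter_le _ _).trans (card_crossing_le_one hp _)
    have hle := sum_le_card_nsmul {w ∈ crossing p S ((m + 1 : ℕ) / M) | q w} p μ
      fun w hw => by
        simp only [crossing, mem_filter] at hw
        exact hμ w hw.1.1 hw.2
    rw [nsmul_eq_mul] at hle
    nlinarith
  calc ∑ m ∈ I, ∑ w ∈ crossing p S ((m + 1 : ℕ) / M) with q w, p w
      = ∑ m ∈ I with {w ∈ crossing p S ((m + 1 : ℕ) / M) | q w}.Nonempty,
          ∑ w ∈ crossing p S ((m + 1 : ℕ) / M) with q w, p w :=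
        (sum_filter_of_ne fun _ _ h => nonempty_of_sum_ne_zero h).symm
    _ ≤ ∑ m ∈ I with {w ∈ crossing p S ((m + 1 : ℕ) / M) | q w}.Nonempty, μ :=
        sum_le_sum fun m _ => hinner m
    _ ≤ μ * (M * ∑ y ∈ S with q y, p y + 1) := by
        rw [sum_const, nsmul_eq_mul, mul_comm]
        exact mul_le_mul_of_nonneg_left (card_nonempty_crossing_filter_le hp hq hM I) hμ0

end OrdConnected

end Binning

section NearlyUniform

variable {X T : Type*} [Fintype X] [LinearOrder X] [DecidableEq T] {p : X → ℝ}

lemma sum_crossing_le_of_ordConnected_fibers (hp : ∀ x, 0 ≤ p x) {M : ℕ} (hM : 0 < M)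
    {S : Finset X} (hS : ∀ x ∈ S, p x ≤ 1 / M) (τ : X → T)
    (hτ : ∀ t, (τ ⁻¹' {t}).OrdConnected) (π : T → ℝ) (hπ : ∀ x, p x ≤ π (τ x)) :
    ∑ m ∈ range M, ∑ w ∈ crossing p S ((m + 1 : ℕ) / M), p w
      ≤ ∑ t ∈ univ.image τ, (M * (∑ x with τ x = t, p x) * π t + 1 / M) := by
  have hM' : (0 : ℝ) < M := by exact_mod_cast hM
  calc ∑ m ∈ range M, ∑ w ∈ crossing p S ((m + 1 : ℕ) / M), p w
      = ∑ t ∈ univ.image τ, ∑ m ∈ range M,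
          ∑ w ∈ crossing p S ((m + 1 : ℕ) / M) with τ w = t, p w := by
        rw [sum_comm]
        exact sum_congr rfl fun m _ =>
          (sum_fiberwise_of_maps_to (fun w _ => mem_image_of_mem τ (mem_univ w)) p).symm
    _ ≤ _ := sum_le_sum fun t ht => ?_
  obtain ⟨x, -, rfl⟩ := mem_image.mp ht
  have hμ0 : 0 ≤ min (π (τ x)) (1 / M) := le_min ((hp x).trans (hπ x)) (by positivity)
  refine (sum_sum_crossing_filter_le hp (hτ (τ x)) hM _ hμ0 fun w hw hqw =>
    le_min (hqw ▸ hπ w) (hS w hw)).trans ?_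
  have hfiber : ∑ y ∈ S with τ y = τ x, p y ≤ ∑ y with τ y = τ x, p y :=
    sum_le_sum_of_subset_of_nonneg (monotone_filter_left _ (subset_univ S)) fun y _ _ => hp y
  have hfiber0 : 0 ≤ ∑ y ∈ S with τ y = τ x, p y := sum_nonneg fun y _ => hp y
  calc min (π (τ x)) (1 / M) * (M * ∑ y ∈ S with τ y = τ x, p y + 1)
      = min (π (τ x)) (1 / M) * (M * ∑ y ∈ S with τ y = τ x, p y)
          + min (π (τ x)) (1 / M) := by ring
    _ ≤ π (τ x) * (M * ∑ y with τ y = τ x, p y) + 1 / M := by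
        gcongr
        · exact (hp x).trans (hπ x)
        · exact min_le_left _ _
        · exact min_le_right _ _
    _ = M * (∑ y with τ y = τ x, p y) * π (τ x) + 1 / M := by ring

theorem exists_fin_sum_abs_sub_le_of_ordConnected_fibers (hp : ∀ x, 0 ≤ p x)
    (hp1 : ∑ x, p x = 1) {M : ℕ} (hM : 0 < M) (τ : X → T)
    (hτ : ∀ t, (τ ⁻¹' {t}).OrdConnected) (π : T → ℝ) (hπ : ∀ x, p x ≤ π (τ x)) :
    ∃ f : X → Fin M,
      ∑ m, |∑ x with f x = m, p x - 1 / M|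
        ≤ 2 * ∑ x with 1 / M ≤ p x, p x
          + 2 * ∑ t ∈ univ.image τ, M * (∑ x with τ x = t, p x) * π t
          + 2 * #(univ.image τ) / M := by
  have hM' : (0 : ℝ) < M := by exact_mod_cast hM
  set S : Finset X := {x | p x < 1 / M}
  set B : Finset X := {x | 1 / M ≤ p x}
  set f : X → Fin M := fun x => ⟨bin p S M x, bin_lt hM x⟩
  set c : ℕ → ℝ := fun m => ∑ w ∈ crossing p S ((m + 1 : ℕ) / M), p w
  refine ⟨f, ?_⟩
  have hsplit (m : Fin M) : ∑ x with f x = m, p x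
      = ∑ x ∈ S with bin p S M x = m, p x + ∑ x ∈ B with f x = m, p x := by
    rw [← sum_filter_add_sum_filter_not {x | f x = m} fun x => p x < 1 / M, filter_filter,
      filter_filter, filter_filter, filter_filter]
    simp only [not_lt, Fin.ext_iff, and_comm]
    rfl
  have hsmall (m : Fin M) : ∑ x ∈ S with bin p S M x = m, p x ≤ 1 / M + c m :=
    sum_bin_eq_le hp ((sum_le_sum_of_subset_of_nonneg (subset_univ S) fun x _ _ => hp x).trans
      hp1.le) m.isLt
  have hexcess (m : Fin M) :
      max (∑ x with f x = m, p x - 1 / M) 0 ≤ c m + ∑ x ∈ B with f x = m, p x := by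
    have hc : 0 ≤ c m := sum_nonneg fun w _ => hp w
    have hb : 0 ≤ ∑ x ∈ B with f x = m, p x := sum_nonneg fun x _ => hp x
    refine max_le ?_ (by linarith)
    linarith [hsplit m, hsmall m]
  have htotal : ∑ m, ∑ x with f x = m, p x = ∑ _m : Fin M, (1 : ℝ) / M := by
    rw [sum_fiberwise, hp1, sum_const, card_univ, Fintype.card_fin, nsmul_eq_mul,
      mul_one_div_cancel hM'.ne']
  have hcross : ∑ m : Fin M, c m
      ≤ ∑ t ∈ univ.image τ, (M * (∑ x with τ x = t, p x) * π t + 1 / M) := by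
    rw [Fin.sum_univ_eq_sum_range c M]
    exact sum_crossing_le_of_ordConnected_fibers hp hM (fun x hx => (mem_filter.mp hx).2.le)
      τ hτ π hπ
  calc ∑ m, |∑ x with f x = m, p x - 1 / M|
      = 2 * ∑ m, max (∑ x with f x = m, p x - 1 / M) 0 :=
        sum_abs_sub_eq_two_mul_sum_max _ htotal
    _ ≤ 2 * (∑ m : Fin M, c m + ∑ x ∈ B, p x) := by
        rw [← sum_fiberwise B f p, ← sum_add_distrib]
        gcongr with m
        exact hexcess m
    _ ≤ _ := by
        rw [sum_add_distrib, sum_const, nsmul_eq_mul] at hcross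
        rw [div_eq_mul_one_div _ (M : ℝ)]
        linarith

end NearlyUniform

theorem exists_linearOrder_ordConnected_fibers {X T : Type*} [Finite X] (τ : X → T) :
    ∃ _ : LinearOrder X, ∀ t, (τ ⁻¹' {t}).OrdConnected := by
  cases nonempty_fintype X
  let g (x : X) : Fin #(univ.image τ) :=
    (univ.image τ).equivFin ⟨τ x, mem_image_of_mem τ (mem_univ x)⟩
  have hg {x y : X} (h : g x = g y) : τ x = τ y := by
    simpa [g] using h
  let κ (x : X) : Lex (Fin #(univ.image τ) × Fin (Fintype.card X)) :=
    toLex (g x, Fintype.equivFin X x)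
  have hκ : Function.Injective κ := fun x y h =>
    (Fintype.equivFin X).injective (congrArg (fun z => (ofLex z).2) h)
  let _ : LinearOrder X := LinearOrder.lift' κ hκ
  refine ⟨‹_›, fun t => ⟨fun x hx z hz y hy => ?_⟩⟩
  have hxy : g x ≤ g y := Prod.Lex.monotone_fst (κ x) (κ y) hy.1
  have hyz : g y ≤ g z := Prod.Lex.monotone_fst (κ y) (κ z) hy.2
  have hxz : g x = g z :=
    congrArg (univ.image τ).equivFin (Subtype.ext ((hx : τ x = t).trans (hz : τ z = t).symm))
  exact (hg (le_antisymm (hyz.trans hxz.ge) hxy)).trans hx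

lemma pow_le_exp_log_mul (t : ℝ) (c : ℕ) : t ^ c ≤ Real.exp (Real.log t * c) := by
  rw [← Real.rpow_natCast]
  exact (le_abs_self _).trans (Real.abs_rpow_le_exp_log_mul t c)

section Types

variable {A : Type*} [Fintype A] {n : ℕ}

lemma natCast_mul_empDist (x : Fin n → A) (a : A) :
    (n : ℝ) * empDist n x a = #{i | x i = a} := by
  rcases n.eq_zero_or_pos with rfl | hn
  · simp
  · exact mul_div_cancel₀ _ (by positivity)

lemma prod_eq_prod_pow_card (P : A → ℝ) (x : Fin n → A) :
    ∏ i, P (x i) = ∏ a, P a ^ #{i | x i = a} := by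
  rw [← prod_fiberwise univ x fun i => P (x i)]
  refine prod_congr rfl fun a _ => ?_
  rw [prod_congr rfl fun i hi => by rw [(mem_filter.mp hi).2], prod_const]

lemma neg_mul_klDiv_add_shEnt_empDist (P : A → ℝ) (x : Fin n → A) :
    -(n : ℝ) * (klDiv' (empDist n x) P + shEnt (empDist n x))
      = ∑ a, Real.log (P a) * #{i | x i = a} := by
  rw [klDiv', shEnt, ← sum_add_distrib, mul_sum]
  refine sum_congr rfl fun a _ => ?_
  rw [← natCast_mul_empDist, Real.negMulLog]
  ring

lemma prod_le_exp_neg_mul_klDiv_add_shEnt {P : A → ℝ} (hP : ∀ a, 0 ≤ P a)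
    (x : Fin n → A) :
    ∏ i, P (x i) ≤ Real.exp (-(n : ℝ) * (klDiv' (empDist n x) P + shEnt (empDist n x))) := by
  rw [neg_mul_klDiv_add_shEnt_empDist, Real.exp_sum, prod_eq_prod_pow_card]
  exact prod_le_prod (fun a _ => pow_nonneg (hP a) _) fun a _ => pow_le_exp_log_mul _ _

end Types

/-- For every probability distribution `P` on a finite set `A`, every `n` and every
positive integer `M`, there is a function `f : Aⁿ → Fin M` whose pushforward of `Pⁿ` is
close to uniform, with the bound expressed via the method of types. -/
theorem stmt_11 {A : Type*} [Fintype A]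
    (P : A → ℝ) (hP0 : ∀ a, 0 ≤ P a) (hP1 : ∑ a, P a = 1)
    (n : ℕ) (M : ℕ) (hM : 0 < M) :
    ∃ f : (Fin n → A) → Fin M,
      ∑ m : Fin M,
          |(∑ aa ∈ univ.filter (fun aa : Fin n → A => f aa = m), ∏ i, P (aa i))
            - 1 / (M : ℝ)|
        ≤ 2 * (∑ aa ∈ univ.filter
              (fun aa : Fin n → A => 1 / (M : ℝ) ≤ ∏ i, P (aa i)), ∏ i, P (aa i))
          + 2 * ∑ Q ∈ typeSet A n, (M : ℝ)
              * (∑ aa ∈ univ.filter (fun aa : Fin n → A => empDist n aa = Q),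
                  ∏ i, P (aa i))
              * Real.exp (-(n : ℝ) * (klDiv' Q P + shEnt Q))
          + 2 * ((typeSet A n).card : ℝ) / M := by
  obtain ⟨_, hτ⟩ :=
    exists_linearOrder_ordConnected_fibers (empDist n : (Fin n → A) → A → ℝ)
  have hsum : ∑ x : Fin n → A, ∏ i, P (x i) = 1 := by
    rw [← Fintype.prod_sum fun _ a => P a, hP1, prod_const_one]
  exact exists_fin_sum_abs_sub_le_of_ordConnected_fibers
    (fun x => prod_nonneg fun i _ => hP0 (x i)) hsum hM (empDist n) hτ
    (fun Q => Real.exp (-(n : ℝ) * (klDiv' Q P + shEnt Q)))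
    (prod_le_exp_neg_mul_klDiv_add_shEnt hP0)
end

section
/- Let P be a probability distribution on a finite set A with all values positive and let R > 0 satisfy H̃'₂(A|P) > R. Then min{ H(Q) + 2D(Q‖P) − R : Q a probability distribution on A with H(Q) + D(Q‖P) ≥ R } = H̃₂(A|P) − R = max_{0≤s≤1} ( H̃_{1+s}(A|P) − sR ). -/
open Finset

lemma gibbs_pt (q q' : ℝ) (hq : 0 ≤ q) (hq' : 0 < q') :
    q * (Real.log q' - Real.log q) ≤ q' - q := by
  rcases hq.eq_or_lt with h | h
  · simp [← h, hq'.le]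
  · have h1 := Real.log_le_sub_one_of_pos (div_pos hq' h)
    rw [Real.log_div hq'.ne' h.ne'] at h1
    have h2 : q * (q' / q) = q' := by field_simp
    nlinarith [mul_le_mul_of_nonneg_left h1 h.le]

lemma gibbs {A : Type*} [Fintype A] (Q Q' : A → ℝ) (hQ : ∀ a, 0 ≤ Q a)
    (hQ1 : ∑ a, Q a = 1) (hQ' : ∀ a, 0 < Q' a) (hQ'1 : ∑ a, Q' a = 1) :
    0 ≤ ∑ a, Q a * (Real.log (Q a) - Real.log (Q' a)) := by
  have h : ∑ a, Q a * (Real.log (Q' a) - Real.log (Q a)) ≤ ∑ a, (Q' a - Q a) :=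
    Finset.sum_le_sum fun a _ => gibbs_pt _ _ (hQ a) (hQ' a)
  rw [Finset.sum_sub_distrib, hQ1, hQ'1] at h
  have h2 : ∑ a, Q a * (Real.log (Q a) - Real.log (Q' a))
      = -∑ a, Q a * (Real.log (Q' a) - Real.log (Q a)) := by
    rw [← Finset.sum_neg_distrib]
    exact Finset.sum_congr rfl fun a _ => by ring
  linarith

lemma jensen_exp {A : Type*} [Fintype A] (w x : A → ℝ) (hw : ∀ a, 0 ≤ w a)
    (hw1 : ∑ a, w a = 1) :
    Real.exp (∑ a, w a * x a) ≤ ∑ a, w a * Real.exp (x a) := by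
  set μ := ∑ a, w a * x a with hμ
  have h : ∀ a, w a * (Real.exp μ * (1 + (x a - μ))) ≤ w a * Real.exp (x a) := by
    intro a
    refine mul_le_mul_of_nonneg_left ?_ (hw a)
    calc Real.exp μ * (1 + (x a - μ))
        ≤ Real.exp μ * Real.exp (x a - μ) := by
          have := Real.add_one_le_exp (x a - μ)
          nlinarith [Real.exp_pos μ]
      _ = Real.exp (x a) := by rw [← Real.exp_add]; ring_nf
  have hsum : ∑ a, w a * (Real.exp μ * (1 + (x a - μ))) = Real.exp μ := by
    have : ∀ a, w a * (Real.exp μ * (1 + (x a - μ)))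
        = Real.exp μ * w a + Real.exp μ * (w a * x a) - (Real.exp μ * μ) * w a := by
      intro a; ring
    rw [Finset.sum_congr rfl fun a _ => this a]
    rw [Finset.sum_sub_distrib, Finset.sum_add_distrib, ← Finset.mul_sum,
      ← Finset.mul_sum, ← Finset.mul_sum, hw1, ← hμ]
    ring
  calc Real.exp μ = ∑ a, w a * (Real.exp μ * (1 + (x a - μ))) := hsum.symm
    _ ≤ ∑ a, w a * Real.exp (x a) := Finset.sum_le_sum fun a _ => h a

/-- For a full-support probability distribution `P` and `R > 0` with `H̃'₂(A|P) > R`: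
`min { H(Q) + 2D(Q‖P) - R : H(Q) + D(Q‖P) ≥ R } = H̃₂(A|P) - R
 = max_{0≤s≤1} (H̃_{1+s}(A|P) - sR)`. -/
theorem stmt_14 {A : Type*} [Fintype A]
    (P : A → ℝ) (hP0 : ∀ a, 0 < P a) (hP1 : ∑ a, P a = 1)
    (R : ℝ) (hR0 : 0 < R)
    (hR : R < (∑ a, P a ^ 2 * (-Real.log (P a))) / (∑ a, P a ^ 2)) :
    sInf {x : ℝ | ∃ Q : A → ℝ, (∀ a, 0 ≤ Q a) ∧ (∑ a, Q a = 1) ∧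
        R ≤ (∑ a, Real.negMulLog (Q a))
            + (∑ a, Q a * (Real.log (Q a) - Real.log (P a))) ∧
        x = (∑ a, Real.negMulLog (Q a))
            + 2 * (∑ a, Q a * (Real.log (Q a) - Real.log (P a))) - R}
      = -Real.log (∑ a, P a ^ 2) - R
    ∧
    -Real.log (∑ a, P a ^ 2) - R
      = sSup ((fun s : ℝ =>
          -Real.log (∑ a, P a ^ (1 + s)) - s * R) '' Set.Icc 0 1) := by
  have hne : (Finset.univ : Finset A).Nonempty := by
    rcases (Finset.univ : Finset A).eq_empty_or_nonempty with h | h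
    · rw [h] at hP1; simp at hP1
    · exact h
  set T := ∑ a, P a ^ 2 with hTdef
  have hT : 0 < T := Finset.sum_pos (fun a _ => pow_pos (hP0 a) 2) hne
  set Q' : A → ℝ := fun a => P a ^ 2 / T with hQ'def
  have hQ'pos : ∀ a, 0 < Q' a := fun a => div_pos (pow_pos (hP0 a) 2) hT
  have hQ'1 : ∑ a, Q' a = 1 := by
    rw [hQ'def, ← Finset.sum_div]; exact div_self hT.ne'
  have hlogQ' : ∀ a, Real.log (Q' a) = 2 * Real.log (P a) - Real.log T := by
    intro a
    rw [hQ'def]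
    rw [Real.log_div (pow_pos (hP0 a) 2).ne' hT.ne', Real.log_pow]
    norm_num
  have hμ : R < ∑ a, Q' a * (-Real.log (P a)) := by
    have h1 : ∑ a, Q' a * (-Real.log (P a)) = (∑ a, P a ^ 2 * (-Real.log (P a))) / T := by
      rw [Finset.sum_div]
      exact Finset.sum_congr rfl fun a _ => by rw [hQ'def]; ring
    rw [h1]; exact hR
  have keyQ : ∀ Q : A → ℝ,
      (∑ a, Real.negMulLog (Q a)) + 2 * (∑ a, Q a * (Real.log (Q a) - Real.log (P a)))
        = ∑ a, Q a * (Real.log (Q a) - 2 * Real.log (P a)) := by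
    intro Q
    rw [Finset.mul_sum, ← Finset.sum_add_distrib]
    exact Finset.sum_congr rfl fun a _ => by simp [Real.negMulLog]; ring
  constructor
  · apply IsLeast.csInf_eq
    constructor
    · refine ⟨Q', fun a => (hQ'pos a).le, hQ'1, ?_, ?_⟩
      · have key : (∑ a, Real.negMulLog (Q' a))
            + (∑ a, Q' a * (Real.log (Q' a) - Real.log (P a)))
            = ∑ a, Q' a * (-Real.log (P a)) := by
          rw [← Finset.sum_add_distrib]
          exact Finset.sum_congr rfl fun a _ => by simp [Real.negMulLog]; ring
        rw [key]; exact hμ.le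
      · rw [keyQ Q']
        have h1 : ∑ a, Q' a * (Real.log (Q' a) - 2 * Real.log (P a))
            = ∑ a, Q' a * (-Real.log T) :=
          Finset.sum_congr rfl fun a _ => by rw [hlogQ' a]; ring
        rw [h1, ← Finset.sum_mul, hQ'1, one_mul]
    · rintro x ⟨Q, hQ0, hQ1, hcon, rfl⟩
      rw [keyQ Q]
      have split : ∑ a, Q a * (Real.log (Q a) - 2 * Real.log (P a))
          = (∑ a, Q a * (Real.log (Q a) - Real.log (Q' a))) + (1 * (-Real.log T)) := by
        have h1 : ∀ a, Q a * (Real.log (Q a) - 2 * Real.log (P a))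
            = Q a * (Real.log (Q a) - Real.log (Q' a)) + Q a * (-Real.log T) := by
          intro a; rw [hlogQ' a]; ring
        rw [Finset.sum_congr rfl fun a _ => h1 a, Finset.sum_add_distrib,
          ← Finset.sum_mul, hQ1]
      have hkl := gibbs Q Q' hQ0 hQ1 hQ'pos hQ'1
      rw [split]
      linarith
  · symm
    apply IsGreatest.csSup_eq
    constructor
    · refine ⟨1, ⟨zero_le_one, le_refl 1⟩, ?_⟩
      have h1 : ∀ a, P a ^ ((1:ℝ) + 1) = P a ^ 2 := by
        intro a
        rw [show (1:ℝ) + 1 = ((2:ℕ):ℝ) by norm_num, Real.rpow_natCast]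
      simp only
      rw [Finset.sum_congr rfl fun a _ => h1 a]
      ring
    · rintro x ⟨s, ⟨hs0, hs1⟩, rfl⟩
      simp only
      set u := ∑ a, Q' a * Real.log (P a) with hu
      have hμ' : R ≤ -u := by
        have h1 : ∑ a, Q' a * (-Real.log (P a)) = -u := by
          rw [hu, ← Finset.sum_neg_distrib]
          exact Finset.sum_congr rfl fun a _ => by ring
        linarith [h1 ▸ hμ]
      have hpow : ∀ a, Q' a * Real.exp ((s - 1) * Real.log (P a)) = P a ^ (1 + s) / T := by
        intro a
        have h1 : Real.exp ((s - 1) * Real.log (P a)) = P a ^ (s - 1) := by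
          rw [Real.rpow_def_of_pos (hP0 a), mul_comm]
        have h2 : P a ^ 2 = P a ^ ((2:ℝ)) := by
          rw [show ((2:ℝ)) = ((2:ℕ):ℝ) by norm_num, Real.rpow_natCast]
        rw [h1, hQ'def]
        simp only
        rw [h2, div_mul_eq_mul_div, ← Real.rpow_add (hP0 a),
          show (2:ℝ) + (s - 1) = 1 + s by ring]
      have hj := jensen_exp Q' (fun a => (s - 1) * Real.log (P a))
        (fun a => (hQ'pos a).le) hQ'1
      have harg : ∑ a, Q' a * ((s - 1) * Real.log (P a)) = (s - 1) * u := by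
        rw [hu, Finset.mul_sum]
        exact Finset.sum_congr rfl fun a _ => by ring
      rw [harg, Finset.sum_congr rfl fun a _ => hpow a, ← Finset.sum_div] at hj
      have hpos : 0 < ∑ a, P a ^ (1 + s) :=
        Finset.sum_pos (fun a _ => Real.rpow_pos_of_pos (hP0 a) _) hne
      have hsum : T * Real.exp ((s - 1) * u) ≤ ∑ a, P a ^ (1 + s) := by
        rw [mul_comm]
        exact (le_div_iff₀ hT).mp hj
      have hlog : Real.log T + (s * u - u) ≤ Real.log (∑ a, P a ^ (1 + s)) := by
        have h1 := Real.log_le_log (by positivity) hsum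
        rw [Real.log_mul hT.ne' (Real.exp_pos _).ne', Real.log_exp] at h1
        nlinarith [h1]
      have h5 : R - s * R ≤ -u + s * u := by nlinarith [hμ', hs1]
      linarith [hlog, h5]
end

section
/- Let P^{A,E} be a joint probability distribution on a product of finite sets A × E, let M be a positive integer, and let {f_X} be a universal₂ ensemble of hash functions from A to {1,…,M}. Then for every t with 0 ≤ t ≤ 1/2, E_X d₁(P^{f_X(A),E} | E) ≤ 3 · M^t · e^{φ(t|P^{A,E})}, where e^{φ(t|P^{A,E})} := Σ_{e∈E} ( Σ_{a∈A} P^{A,E}(a,e)^{1/(1−t)} )^{1−t}. -/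
/-!
Fix `e`, write `p = P(·, e)`, `u = 1/(1-t)` and `S = ∑ p^u`, and split `p` at the threshold
`c = (S/M)^(1-t)`. The part of `p` above `c` shifts the deviation by at most twice its mass,
which is `≤ c^(1-u) S` because `x ≤ c^(1-u) x^u` for `x > c`. For the part below `c`,
universality makes the expected squared deviation `E ∑_m (fiber_m - mean)^2` at most its
collision mass `∑ p^2 ≤ c^(2-u) S`, so Cauchy–Schwarz over the `M` bins and Jensen bound the
expected deviation by `√(M c^(2-u) S)`. The choice of `c` makes `S = M c^u`, so both bounds
equal `M c = M^t S^(1-t)`.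
-/

open Finset

lemma le_rpow_mul_rpow_of_lt {c x u : ℝ} (hc : 0 < c) (hcx : c < x) (hu : 1 ≤ u) :
    x ≤ c ^ (1 - u) * x ^ u := by
  have hx : 0 < x := hc.trans hcx
  calc x = x ^ (1 - u) * x ^ u := by rw [← Real.rpow_add hx, sub_add_cancel, Real.rpow_one]
    _ ≤ c ^ (1 - u) * x ^ u := mul_le_mul_of_nonneg_right
        (Real.rpow_le_rpow_of_nonpos hc hcx.le (by linarith)) (Real.rpow_nonneg hx.le u)

lemma sq_le_rpow_mul_rpow_of_le {c x u : ℝ} (hx : 0 ≤ x) (hxc : x ≤ c) (hu2 : u ≤ 2) :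
    x ^ 2 ≤ c ^ (2 - u) * x ^ u := by
  calc x ^ 2 = x ^ (2 - u) * x ^ u := by
        rw [← Real.rpow_add' hx (by norm_num), sub_add_cancel, Real.rpow_two]
    _ ≤ c ^ (2 - u) * x ^ u := by gcongr

lemma mul_mul_div_rpow_eq_rpow_mul_rpow {M S : ℝ} (hM : 0 < M) (hS : 0 ≤ S) (t : ℝ) :
    M * (S / M) ^ (1 - t) = M ^ t * S ^ (1 - t) := by
  have hsplit : M ^ t * M ^ (1 - t) = M := by
    rw [← Real.rpow_add hM, add_sub_cancel, Real.rpow_one]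
  rw [Real.div_rpow hS hM.le, mul_div_assoc', div_eq_iff (Real.rpow_pos_of_pos hM _).ne']
  linear_combination -S ^ (1 - t) * hsplit

section Hashing

universe u

variable {A : Type u} [Fintype A] {M : ℕ}

noncomputable def fiberSum (g : A → Fin M) (q : A → ℝ) (m : Fin M) : ℝ :=
  ∑ a ∈ univ.filter (fun a => g a = m), q a

/-- The slice of `d₁(P^{g(A),E} | E)` at a fixed `e`, for `q = P(·, e)`. -/
noncomputable def distinguishability (g : A → Fin M) (q : A → ℝ) : ℝ :=
  ∑ m, |fiberSum g q m - (∑ a, q a) / M|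

lemma sum_fiberSum (g : A → Fin M) (q : A → ℝ) : ∑ m, fiberSum g q m = ∑ a, q a :=
  Finset.sum_fiberwise _ _ _

lemma fiberSum_add (g : A → Fin M) (q r : A → ℝ) (m : Fin M) :
    fiberSum g (q + r) m = fiberSum g q m + fiberSum g r m :=
  sum_add_distrib

lemma fiberSum_nonneg (g : A → Fin M) {q : A → ℝ} (hq : 0 ≤ q) (m : Fin M) :
    0 ≤ fiberSum g q m :=
  sum_nonneg fun a _ => hq a

lemma distinguishability_add_le (g : A → Fin M) (q r : A → ℝ) :
    distinguishability g (q + r) ≤ distinguishability g q + distinguishability g r := by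
  rw [distinguishability, distinguishability, distinguishability, ← sum_add_distrib]
  refine sum_le_sum fun m _ => ?_
  have hsplit : fiberSum g (q + r) m - (∑ a, (q + r) a) / M
      = (fiberSum g q m - (∑ a, q a) / M) + (fiberSum g r m - (∑ a, r a) / M) := by
    simp only [fiberSum_add, Pi.add_apply, sum_add_distrib]
    ring
  rw [hsplit]
  exact abs_add_le _ _

lemma distinguishability_le_two_mul_sum (g : A → Fin M) {q : A → ℝ} (hq : 0 ≤ q) :
    distinguishability g q ≤ 2 * ∑ a, q a := by
  have htotal : 0 ≤ ∑ a, q a := sum_nonneg fun a _ => hq a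
  calc distinguishability g q ≤ ∑ m : Fin M, (fiberSum g q m + (∑ a, q a) / M) := by
        refine sum_le_sum fun m _ => (abs_sub _ _).trans_eq ?_
        rw [abs_of_nonneg (fiberSum_nonneg g hq m), abs_of_nonneg (by positivity)]
    _ = ∑ a, q a + M * ((∑ a, q a) / M) := by
        rw [sum_add_distrib, sum_fiberSum, sum_const, card_univ, Fintype.card_fin, nsmul_eq_mul]
    _ ≤ 2 * ∑ a, q a := by
        rcases M.eq_zero_or_pos with rfl | hM
        · simp only [Nat.cast_zero, zero_mul]; linarith
        · rw [mul_div_cancel₀ _ (by positivity)]; linarith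

lemma distinguishability_le_sqrt (g : A → Fin M) (q : A → ℝ) :
    distinguishability g q ≤ √(M * ∑ m, (fiberSum g q m - (∑ a, q a) / M) ^ 2) := by
  refine Real.le_sqrt_of_sq_le ?_
  simpa [distinguishability, sq_abs] using
    sq_sum_le_card_mul_sum_sq (s := univ) (f := fun m => |fiberSum g q m - (∑ a, q a) / M|)

lemma sum_fiberSum_sq (g : A → Fin M) (q : A → ℝ) :
    ∑ m, fiberSum g q m ^ 2 = ∑ a, ∑ a', if g a = g a' then q a * q a' else 0 := by
  simp_rw [fiberSum, sum_filter, sq, sum_mul_sum, ite_mul, mul_ite, zero_mul, mul_zero]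
  rw [sum_comm]
  refine sum_congr rfl fun a _ => ?_
  rw [sum_comm]
  refine sum_congr rfl fun a' _ => ?_
  simp only [ite_self, sum_ite_eq, mem_univ, if_true, @eq_comm _ (g a')]

lemma sum_sq_fiberSum_sub (hM : 0 < M) (g : A → Fin M) (q : A → ℝ) :
    ∑ m, (fiberSum g q m - (∑ a, q a) / M) ^ 2
      = ∑ m, fiberSum g q m ^ 2 - (∑ a, q a) ^ 2 / M := by
  have hcross : ∑ m : Fin M, (fiberSum g q m - (∑ a, q a) / M) ^ 2
      = ∑ m, fiberSum g q m ^ 2 - 2 * ((∑ a, q a) / M) * ∑ m, fiberSum g q m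
        + M * ((∑ a, q a) / M) ^ 2 := by
    simp only [sub_sq, sum_add_distrib, sum_sub_distrib, ← sum_mul, ← mul_sum, sum_const,
      card_univ, Fintype.card_fin, nsmul_eq_mul]
    ring
  rw [hcross, sum_fiberSum]
  field_simp
  ring

end Hashing

section UniversalHashing

universe u v

variable {A : Type u} [Fintype A] {M : ℕ} {Ω : Type v} [Fintype Ω] {μ : Ω → ℝ}
  {f : Ω → A → Fin M}

def IsUniversal₂ (μ : Ω → ℝ) (f : Ω → A → Fin M) : Prop :=
  ∀ a a' : A, a ≠ a' → ∑ ω ∈ univ.filter (fun ω => f ω a = f ω a'), μ ω ≤ 1 / M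

lemma expected_sum_fiberSum_sq_le (hμ1 : ∑ ω, μ ω = 1)
    (huniv : IsUniversal₂ μ f) {q : A → ℝ} (hq : 0 ≤ q) :
    ∑ ω, μ ω * ∑ m, fiberSum (f ω) q m ^ 2 ≤ ∑ a, q a ^ 2 + (∑ a, q a) ^ 2 / M := by
  classical
  have hswap : ∑ ω, μ ω * ∑ m, fiberSum (f ω) q m ^ 2
      = ∑ a, ∑ a', q a * q a' * ∑ ω ∈ univ.filter (fun ω => f ω a = f ω a'), μ ω := by
    simp_rw [sum_fiberSum_sq, mul_sum, sum_filter]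
    rw [sum_comm]
    refine sum_congr rfl fun a _ => ?_
    rw [sum_comm]
    refine sum_congr rfl fun a' _ => sum_congr rfl fun ω _ => ?_
    split_ifs <;> ring
  have hpair : ∀ a a', q a * q a' * ∑ ω ∈ univ.filter (fun ω => f ω a = f ω a'), μ ω
      ≤ (if a = a' then q a ^ 2 else 0) + q a * q a' / M := by
    intro a a'
    have hqq : 0 ≤ q a * q a' := mul_nonneg (hq a) (hq a')
    split_ifs with h
    · subst h
      rw [filter_true_of_mem fun ω _ => rfl, hμ1]
      have : 0 ≤ q a * q a / M := by positivity
      nlinarith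
    · calc q a * q a' * ∑ ω ∈ univ.filter (fun ω => f ω a = f ω a'), μ ω
          ≤ q a * q a' * (1 / M) := mul_le_mul_of_nonneg_left (huniv a a' h) hqq
        _ = 0 + q a * q a' / M := by ring
  calc ∑ ω, μ ω * ∑ m, fiberSum (f ω) q m ^ 2
      ≤ ∑ a, ∑ a', ((if a = a' then q a ^ 2 else 0) + q a * q a' / M) := by
        rw [hswap]
        exact sum_le_sum fun a _ => sum_le_sum fun a' _ => hpair a a'
    _ = ∑ a, q a ^ 2 + (∑ a, q a) ^ 2 / M := by
        simp only [sum_add_distrib, sum_ite_eq, mem_univ, if_true, ← sum_div, sq, sum_mul_sum]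

lemma expected_sum_sq_fiberSum_sub_le (hM : 0 < M) (hμ1 : ∑ ω, μ ω = 1)
    (huniv : IsUniversal₂ μ f) {q : A → ℝ} (hq : 0 ≤ q) :
    ∑ ω, μ ω * ∑ m, (fiberSum (f ω) q m - (∑ a, q a) / M) ^ 2 ≤ ∑ a, q a ^ 2 := by
  simp_rw [sum_sq_fiberSum_sub hM, mul_sub]
  rw [sum_sub_distrib, ← sum_mul, hμ1, one_mul]
  linarith [expected_sum_fiberSum_sq_le hμ1 huniv hq]

lemma expected_distinguishability_le_sqrt (hM : 0 < M) (hμ0 : ∀ ω, 0 ≤ μ ω)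
    (hμ1 : ∑ ω, μ ω = 1)
    (huniv : IsUniversal₂ μ f) {q : A → ℝ} (hq : 0 ≤ q) :
    ∑ ω, μ ω * distinguishability (f ω) q ≤ √(M * ∑ a, q a ^ 2) := by
  set V : Ω → ℝ := fun ω => ∑ m, (fiberSum (f ω) q m - (∑ a, q a) / M) ^ 2
  calc ∑ ω, μ ω * distinguishability (f ω) q ≤ ∑ ω, μ ω * √(M * V ω) :=
        sum_le_sum fun ω _ =>
          mul_le_mul_of_nonneg_left (distinguishability_le_sqrt (f ω) q) (hμ0 ω)
    _ ≤ √(∑ ω, μ ω * (M * V ω)) := by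
        simpa only [smul_eq_mul] using Real.strictConcaveOn_sqrt.concaveOn.le_map_sum
          (t := univ) (p := fun ω => M * V ω) (fun ω _ => hμ0 ω) hμ1
          (fun ω _ => Set.mem_Ici.mpr (by positivity))
    _ ≤ √(M * ∑ a, q a ^ 2) := by
        refine Real.sqrt_le_sqrt ?_
        simp_rw [mul_left_comm _ (M : ℝ), ← mul_sum]
        exact mul_le_mul_of_nonneg_left
          (expected_sum_sq_fiberSum_sub_le hM hμ1 huniv hq) (Nat.cast_nonneg M)

lemma expected_distinguishability_add_le (hM : 0 < M) (hμ0 : ∀ ω, 0 ≤ μ ω)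
    (hμ1 : ∑ ω, μ ω = 1)
    (huniv : IsUniversal₂ μ f) {q r : A → ℝ} (hq : 0 ≤ q) (hr : 0 ≤ r) :
    ∑ ω, μ ω * distinguishability (f ω) (q + r) ≤ 2 * ∑ a, q a + √(M * ∑ a, r a ^ 2) := by
  calc ∑ ω, μ ω * distinguishability (f ω) (q + r)
      ≤ ∑ ω, μ ω * (2 * ∑ a, q a + distinguishability (f ω) r) :=
        sum_le_sum fun ω _ => mul_le_mul_of_nonneg_left (by
          linarith [distinguishability_add_le (f ω) q r,
            distinguishability_le_two_mul_sum (f ω) hq]) (hμ0 ω)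
    _ = 2 * ∑ a, q a + ∑ ω, μ ω * distinguishability (f ω) r := by
        simp only [mul_add, sum_add_distrib, ← sum_mul, hμ1, one_mul]
    _ ≤ 2 * ∑ a, q a + √(M * ∑ a, r a ^ 2) :=
        add_le_add_right (expected_distinguishability_le_sqrt hM hμ0 hμ1 huniv hr) _

lemma expected_distinguishability_le_of_threshold (hM : 0 < M) (hμ0 : ∀ ω, 0 ≤ μ ω)
    (hμ1 : ∑ ω, μ ω = 1)
    (huniv : IsUniversal₂ μ f) {p : A → ℝ} (hp : 0 ≤ p) {c u : ℝ} (hc : 0 < c) (hu1 : 1 ≤ u)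
    (hu2 : u ≤ 2) :
    ∑ ω, μ ω * distinguishability (f ω) p
      ≤ 2 * (c ^ (1 - u) * ∑ a, p a ^ u) + √(M * (c ^ (2 - u) * ∑ a, p a ^ u)) := by
  set large : A → ℝ := fun a => if c < p a then p a else 0
  set small : A → ℝ := fun a => if c < p a then 0 else p a
  have hlarge0 : 0 ≤ large := fun a => by
    simp only [Pi.zero_apply, large]; split_ifs; exacts [hp a, le_rfl]
  have hsmall0 : 0 ≤ small := fun a => by
    simp only [Pi.zero_apply, small]; split_ifs; exacts [le_rfl, hp a]
  have hsplit : p = large + small := funext fun a => by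
    simp only [Pi.add_apply, large, small]; split_ifs <;> simp
  have hlarge : ∑ a, large a ≤ c ^ (1 - u) * ∑ a, p a ^ u := by
    rw [mul_sum]
    refine sum_le_sum fun a _ => ?_
    simp only [large]
    split_ifs with h
    · exact le_rpow_mul_rpow_of_lt hc h hu1
    · exact mul_nonneg (Real.rpow_nonneg hc.le _) (Real.rpow_nonneg (hp a) _)
  have hsmall : ∑ a, small a ^ 2 ≤ c ^ (2 - u) * ∑ a, p a ^ u := by
    rw [mul_sum]
    refine sum_le_sum fun a _ => ?_
    simp only [small]
    split_ifs with h
    · simpa using mul_nonneg (Real.rpow_nonneg hc.le (2 - u)) (Real.rpow_nonneg (hp a) u)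
    · exact sq_le_rpow_mul_rpow_of_le (hp a) (not_lt.mp h) hu2
  calc ∑ ω, μ ω * distinguishability (f ω) p
      ≤ 2 * ∑ a, large a + √(M * ∑ a, small a ^ 2) := by
        rw [hsplit]
        exact expected_distinguishability_add_le hM hμ0 hμ1 huniv hlarge0 hsmall0
    _ ≤ 2 * (c ^ (1 - u) * ∑ a, p a ^ u) + √(M * (c ^ (2 - u) * ∑ a, p a ^ u)) := by
        gcongr

lemma expected_distinguishability_le (hM : 0 < M) (hμ0 : ∀ ω, 0 ≤ μ ω)
    (hμ1 : ∑ ω, μ ω = 1)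
    (huniv : IsUniversal₂ μ f) {p : A → ℝ} (hp : 0 ≤ p) {t : ℝ} (ht0 : 0 ≤ t)
    (ht1 : t ≤ 1 / 2) :
    ∑ ω, μ ω * distinguishability (f ω) p
      ≤ 3 * (M : ℝ) ^ t * (∑ a, p a ^ (1 / (1 - t))) ^ (1 - t) := by
  have ht : 0 < 1 - t := by linarith
  set u := 1 / (1 - t) with hu
  have hu1 : 1 ≤ u := by rw [hu, le_div_iff₀ ht]; linarith
  have hu2 : u ≤ 2 := by rw [hu, div_le_iff₀ ht]; linarith
  set S := ∑ a, p a ^ u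
  have hMpos : (0 : ℝ) < M := Nat.cast_pos.mpr hM
  have hS0 : 0 ≤ S := sum_nonneg fun a _ => Real.rpow_nonneg (hp a) u
  rcases hS0.eq_or_lt with hS | hS
  · have h : _ ≤ 2 * (1 ^ (1 - u) * S) + √(M * (1 ^ (2 - u) * S)) :=
      expected_distinguishability_le_of_threshold hM hμ0 hμ1 huniv hp one_pos hu1 hu2
    rw [← hS] at h ⊢
    simpa [Real.zero_rpow ht.ne'] using h
  set c := (S / M) ^ (1 - t)
  have hc : 0 < c := by positivity
  have hS_eq : S = M * c ^ u := by
    rw [← Real.rpow_mul (by positivity), hu, mul_one_div_cancel ht.ne', Real.rpow_one,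
      mul_div_cancel₀ _ hMpos.ne']
  have hlarge : c ^ (1 - u) * S = M * c := by
    rw [hS_eq, mul_left_comm, ← Real.rpow_add hc, sub_add_cancel, Real.rpow_one]
  have hsmall : M * (c ^ (2 - u) * S) = (M * c) ^ 2 := by
    rw [hS_eq, mul_left_comm _ (M : ℝ), ← Real.rpow_add hc, sub_add_cancel, Real.rpow_two]
    ring
  calc ∑ ω, μ ω * distinguishability (f ω) p
      ≤ 2 * (c ^ (1 - u) * S) + √(M * (c ^ (2 - u) * S)) :=
        expected_distinguishability_le_of_threshold hM hμ0 hμ1 huniv hp hc hu1 hu2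
    _ = 3 * (M * c) := by rw [hlarge, hsmall, Real.sqrt_sq (by positivity)]; ring
    _ = 3 * (M : ℝ) ^ t * S ^ (1 - t) := by
        rw [mul_assoc, mul_mul_div_rpow_eq_rpow_mul_rpow hMpos hS.le]

theorem stmt_15_general {A E : Type*} [Fintype A] [Fintype E]
    (P : A → E → ℝ) (hP0 : ∀ a e, 0 ≤ P a e)
    (M : ℕ) (hM : 0 < M)
    {Ω : Type*} [Fintype Ω] (μ : Ω → ℝ) (hμ0 : ∀ ω, 0 ≤ μ ω) (hμ1 : ∑ ω, μ ω = 1)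
    (f : Ω → A → Fin M)
    (huniv : ∀ a a' : A, a ≠ a' →
      ∑ ω ∈ univ.filter (fun ω => f ω a = f ω a'), μ ω ≤ 1 / M)
    (t : ℝ) (ht0 : 0 ≤ t) (ht1 : t ≤ 1 / 2) :
    ∑ ω, μ ω * ∑ m : Fin M, ∑ e,
        |(∑ a ∈ univ.filter (fun a => f ω a = m), P a e) - (∑ a, P a e) / M|
      ≤ 3 * (M : ℝ) ^ t * ∑ e, (∑ a, P a e ^ (1 / (1 - t))) ^ (1 - t) := by
  calc ∑ ω, μ ω * ∑ m : Fin M, ∑ e,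
        |(∑ a ∈ univ.filter (fun a => f ω a = m), P a e) - (∑ a, P a e) / M|
      = ∑ e, ∑ ω, μ ω * distinguishability (f ω) (fun a => P a e) := by
        simp only [distinguishability, fiberSum, mul_sum]
        exact (sum_congr rfl fun ω _ => sum_comm).trans sum_comm
    _ ≤ ∑ e, 3 * (M : ℝ) ^ t * (∑ a, P a e ^ (1 / (1 - t))) ^ (1 - t) :=
        sum_le_sum fun e _ =>
          expected_distinguishability_le hM hμ0 hμ1 huniv (fun a => hP0 a e) ht0 ht1
    _ = 3 * (M : ℝ) ^ t * ∑ e, (∑ a, P a e ^ (1 / (1 - t))) ^ (1 - t) := by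
        rw [mul_sum]

/-- For a joint probability distribution `P` on `A × E`, a universal₂ ensemble of hash
functions `f : Ω → A → Fin M`, and every `t ∈ [0, 1/2]`, Eve's expected distinguishability
satisfies `E_X d₁(P^{f_X(A),E}|E) ≤ 3 · M^t · e^{φ(t|P^{A,E})}`, where
`e^{φ(t|P^{A,E})} = ∑_e (∑_a P(a,e)^{1/(1-t)})^{1-t}`. -/
theorem stmt_15 {A E : Type*} [Fintype A] [Fintype E]
    (P : A → E → ℝ) (hP0 : ∀ a e, 0 ≤ P a e) (hP1 : ∑ a, ∑ e, P a e = 1)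
    (M : ℕ) (hM : 0 < M)
    {Ω : Type*} [Fintype Ω] (μ : Ω → ℝ) (hμ0 : ∀ ω, 0 ≤ μ ω) (hμ1 : ∑ ω, μ ω = 1)
    (f : Ω → A → Fin M)
    (huniv : ∀ a a' : A, a ≠ a' →
      ∑ ω ∈ univ.filter (fun ω => f ω a = f ω a'), μ ω ≤ 1 / M)
    (t : ℝ) (ht0 : 0 ≤ t) (ht1 : t ≤ 1 / 2) :
    ∑ ω, μ ω * ∑ m : Fin M, ∑ e,
        |(∑ a ∈ univ.filter (fun a => f ω a = m), P a e) - (∑ a, P a e) / M|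
      ≤ 3 * (M : ℝ) ^ t * ∑ e, (∑ a, P a e ^ (1 / (1 - t))) ^ (1 - t) :=
  stmt_15_general P hP0 M hM μ hμ0 hμ1 f huniv t ht0 ht1
end UniversalHashing
end

section
/- Let P^{A,E} be a joint probability distribution on a product of finite sets A × E and let R < H(A|E), the conditional Shannon entropy of A given E. Then max_{0≤s≤1} ( H̃_{1+s}(A|E|P^{A,E}) − sR )/2 ≤ max_{0≤t≤1/2} ( −φ(t|P^{A,E}) − tR ). -/
/-!
Put `t = s / (1 + s)`, so that `1 / (1 - t) = 1 + s`. Reading the sum inside `H̃_{1+s}` as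
`∑_e P(e) x_e^{1+s}` with `x_e = (∑_a P(a,e)^{1+s})^{1/(1+s)} / P(e)`, the power-mean
inequality `∑_e P(e) x_e ≤ (∑_e P(e) x_e^{1+s})^{1/(1+s)}` is exactly
`(1 + s) φ(t) ≤ -H̃_{1+s}`, i.e. `(H̃_{1+s} - sR)/(1 + s) ≤ -φ(t) - tR`. Since `1 + s ≤ 2`, a
positive value `(H̃_{1+s} - sR)/2` is at most the left side, and a nonpositive one is at most
the value `0` of `-φ(t) - tR` at `t = 0`.
-/

open Finset

theorem Real.sum_le_rpow_sum_rpow_mul_rpow_one_sub {ι : Type*} (s : Finset ι) {w z : ι → ℝ}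
    (hw : ∀ i ∈ s, 0 < w i) (hw1 : ∑ i ∈ s, w i = 1) (hz : ∀ i ∈ s, 0 ≤ z i) {p : ℝ}
    (hp : 1 ≤ p) :
    ∑ i ∈ s, z i ≤ (∑ i ∈ s, z i ^ p * w i ^ (1 - p)) ^ (1 / p) := by
  have hmean := Real.arith_mean_le_rpow_mean s w (fun i => z i / w i)
    (fun i hi => (hw i hi).le) hw1 (fun i hi => div_nonneg (hz i hi) (hw i hi).le) hp
  convert hmean using 3 with i hi i hi
  · field_simp [(hw i hi).ne']
  · rw [Real.div_rpow (hz i hi) (hw i hi).le, Real.rpow_sub (hw i hi), Real.rpow_one]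
    field_simp

section
variable {A E : Type*} [Fintype A]

def marginal (P : A → E → ℝ) (e : E) : ℝ := ∑ a, P a e

theorem marginal_nonneg {P : A → E → ℝ} (hP0 : ∀ a e, 0 ≤ P a e) (e : E) :
    0 ≤ marginal P e :=
  sum_nonneg fun a _ => hP0 a e

variable [Fintype E]

noncomputable def renyiSum (P : A → E → ℝ) (s : ℝ) : ℝ :=
  ∑ e ∈ univ.filter (fun e => 0 < marginal P e), ∑ a, P a e ^ (1 + s) * marginal P e ^ (-s)

noncomputable def condRenyiEntropy (P : A → E → ℝ) (s : ℝ) : ℝ :=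
  -Real.log (renyiSum P s)

noncomputable def phiSum (P : A → E → ℝ) (t : ℝ) : ℝ :=
  ∑ e, (∑ a, P a e ^ (1 / (1 - t))) ^ (1 - t)

noncomputable def gallagerPhi (P : A → E → ℝ) (t : ℝ) : ℝ :=
  Real.log (phiSum P t)

variable {P : A → E → ℝ}

theorem exists_pos_of_sum_sum_eq_one (hP0 : ∀ a e, 0 ≤ P a e) (hP1 : ∑ a, ∑ e, P a e = 1) :
    ∃ a e, 0 < P a e := by
  by_contra! h
  have : ∑ a, ∑ e, P a e = 0 :=
    sum_eq_zero fun a _ => sum_eq_zero fun e _ => (h a e).antisymm (hP0 a e)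
  linarith

theorem sum_filter_marginal_pos (hP0 : ∀ a e, 0 ≤ P a e) (hP1 : ∑ a, ∑ e, P a e = 1) :
    ∑ e ∈ univ.filter (fun e => 0 < marginal P e), marginal P e = 1 := by
  rw [sum_filter_of_ne fun e _ he => (marginal_nonneg hP0 e).lt_of_ne' he, ← hP1]
  exact sum_comm

theorem renyiSum_nonneg (hP0 : ∀ a e, 0 ≤ P a e) (s : ℝ) : 0 ≤ renyiSum P s :=
  sum_nonneg fun e _ => sum_nonneg fun a _ =>
    mul_nonneg (Real.rpow_nonneg (hP0 a e) _) (Real.rpow_nonneg (marginal_nonneg hP0 e) _)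

theorem le_phiSum (hP0 : ∀ a e, 0 ≤ P a e) {t : ℝ} (ht : t < 1) (a : A) (e : E) :
    P a e ≤ phiSum P t := by
  have h1t : 0 < 1 - t := by linarith
  have hcol : ∀ e, 0 ≤ ∑ a, P a e ^ (1 / (1 - t)) := fun e =>
    sum_nonneg fun a _ => Real.rpow_nonneg (hP0 a e) _
  calc P a e = (P a e ^ (1 / (1 - t))) ^ (1 - t) := by
        rw [← Real.rpow_mul (hP0 a e), one_div_mul_cancel h1t.ne', Real.rpow_one]
    _ ≤ (∑ a, P a e ^ (1 / (1 - t))) ^ (1 - t) := by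
        gcongr
        · exact Real.rpow_nonneg (hP0 a e) _
        · exact single_le_sum (f := fun a => P a e ^ (1 / (1 - t)))
            (fun a _ => Real.rpow_nonneg (hP0 a e) _) (mem_univ a)
    _ ≤ phiSum P t :=
        single_le_sum (f := fun e => (∑ a, P a e ^ (1 / (1 - t))) ^ (1 - t))
          (fun e _ => Real.rpow_nonneg (hcol e) _) (mem_univ e)

theorem log_le_gallagerPhi (hP0 : ∀ a e, 0 ≤ P a e) {t : ℝ} (ht : t < 1) {a : A} {e : E}
    (hpos : 0 < P a e) : Real.log (P a e) ≤ gallagerPhi P t :=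
  Real.log_le_log hpos (le_phiSum hP0 ht a e)

theorem gallagerPhi_zero (hP1 : ∑ a, ∑ e, P a e = 1) : gallagerPhi P 0 = 0 := by
  simp only [gallagerPhi, phiSum, sub_zero, div_one, Real.rpow_one]
  rw [sum_comm, hP1, Real.log_one]

theorem phiSum_div_one_add (hP0 : ∀ a e, 0 ≤ P a e) {s : ℝ} (hs : 1 + s ≠ 0) :
    phiSum P (s / (1 + s)) =
      ∑ e ∈ univ.filter (fun e => 0 < marginal P e), (∑ a, P a e ^ (1 + s)) ^ (1 / (1 + s)) := by
  have h1t : 1 - s / (1 + s) = 1 / (1 + s) := by field_simp; ring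
  rw [phiSum, h1t, one_div_one_div, sum_filter_of_ne]
  intro e _ hne
  contrapose! hne
  have hPe : ∀ a, P a e = 0 := fun a => (sum_eq_zero_iff_of_nonneg fun a _ => hP0 a e).1
    (hne.antisymm (marginal_nonneg hP0 e)) a (mem_univ a)
  simp [hPe, Real.zero_rpow hs, Real.zero_rpow (inv_ne_zero hs)]

theorem phiSum_div_one_add_le (hP0 : ∀ a e, 0 ≤ P a e) (hP1 : ∑ a, ∑ e, P a e = 1)
    {s : ℝ} (hs : 0 ≤ s) :
    phiSum P (s / (1 + s)) ≤ renyiSum P s ^ (1 / (1 + s)) := by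
  have hs1 : 0 < 1 + s := by linarith
  have hcol : ∀ e, 0 ≤ ∑ a, P a e ^ (1 + s) := fun e =>
    sum_nonneg fun a _ => Real.rpow_nonneg (hP0 a e) _
  rw [phiSum_div_one_add hP0 hs1.ne', renyiSum]
  convert Real.sum_le_rpow_sum_rpow_mul_rpow_one_sub _
    (z := fun e => (∑ a, P a e ^ (1 + s)) ^ (1 / (1 + s))) (fun e he => (mem_filter.1 he).2)
    (sum_filter_marginal_pos hP0 hP1) (fun e _ => Real.rpow_nonneg (hcol e) _)
    (le_add_of_nonneg_right hs) using 3 with e he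
  rw [← Real.rpow_mul (hcol e), one_div_mul_cancel hs1.ne', Real.rpow_one, ← sum_mul]
  ring_nf

theorem gallagerPhi_div_one_add_le (hP0 : ∀ a e, 0 ≤ P a e) (hP1 : ∑ a, ∑ e, P a e = 1)
    {s : ℝ} (hs : 0 ≤ s) :
    gallagerPhi P (s / (1 + s)) ≤ -condRenyiEntropy P s / (1 + s) := by
  have hs1 : 0 < 1 + s := by linarith
  obtain ⟨a, e, hpos⟩ := exists_pos_of_sum_sum_eq_one hP0 hP1
  have hle := phiSum_div_one_add_le hP0 hP1 hs
  have hphi : 0 < phiSum P (s / (1 + s)) :=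
    hpos.trans_le (le_phiSum hP0 ((div_lt_one hs1).2 (lt_one_add s)) a e)
  have hrenyi : 0 < renyiSum P s := by
    refine (renyiSum_nonneg hP0 s).lt_of_ne' fun h0 => ?_
    rw [h0, Real.zero_rpow (one_div_pos.2 hs1).ne'] at hle
    exact hphi.not_ge hle
  calc gallagerPhi P (s / (1 + s)) ≤ Real.log (renyiSum P s ^ (1 / (1 + s))) :=
        Real.log_le_log hphi hle
    _ = -condRenyiEntropy P s / (1 + s) := by
      rw [Real.log_rpow hrenyi, condRenyiEntropy, neg_neg, one_div_mul_eq_div]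

end

theorem stmt_16_general {A E : Type*} [Fintype A] [Fintype E]
    (P : A → E → ℝ) (hP0 : ∀ a e, 0 ≤ P a e) (hP1 : ∑ a, ∑ e, P a e = 1)
    (R : ℝ) :
    sSup ((fun s : ℝ =>
        (-Real.log (∑ e ∈ univ.filter (fun e => 0 < ∑ a', P a' e),
            ∑ a, P a e ^ (1 + s) * (∑ a', P a' e) ^ (-s)) - s * R) / 2) ''
        Set.Icc 0 1)
      ≤ sSup ((fun t : ℝ =>
          -Real.log (∑ e, (∑ a, P a e ^ (1 / (1 - t))) ^ (1 - t)) - t * R) ''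
        Set.Icc 0 (1 / 2)) := by
  change sSup ((fun s => (condRenyiEntropy P s - s * R) / 2) '' Set.Icc 0 1)
    ≤ sSup ((fun t => -gallagerPhi P t - t * R) '' Set.Icc 0 (1 / 2))
  obtain ⟨a, e, hpos⟩ := exists_pos_of_sum_sum_eq_one hP0 hP1
  have hbdd : BddAbove ((fun t => -gallagerPhi P t - t * R) '' Set.Icc 0 (1 / 2)) := by
    refine ⟨-Real.log (P a e) + |R|, ?_⟩
    rintro _ ⟨t, ⟨ht0, ht1⟩, rfl⟩
    have := log_le_gallagerPhi hP0 (t := t) (by linarith) hpos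
    nlinarith [neg_abs_le R, le_abs_self R]
  have hzero : 0 ≤ sSup ((fun t => -gallagerPhi P t - t * R) '' Set.Icc 0 (1 / 2)) :=
    le_csSup_of_le hbdd ⟨0, by norm_num, rfl⟩ (by simp [gallagerPhi_zero hP1])
  refine csSup_le ((Set.nonempty_Icc.2 zero_le_one).image _) ?_
  rintro _ ⟨s, ⟨hs0, hs1⟩, rfl⟩
  have ht : s / (1 + s) ∈ Set.Icc (0 : ℝ) (1 / 2) :=
    ⟨by positivity, by rw [div_le_iff₀ (by positivity)]; linarith⟩
  have hmem := le_csSup hbdd (Set.mem_image_of_mem _ ht)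
  have hphi := gallagerPhi_div_one_add_le hP0 hP1 hs0
  rcases le_or_gt (condRenyiEntropy P s - s * R) 0 with hx | hx
  · linarith
  calc (condRenyiEntropy P s - s * R) / 2 ≤ (condRenyiEntropy P s - s * R) / (1 + s) :=
        div_le_div_of_nonneg_left hx.le (by positivity) (by linarith)
    _ = -(-condRenyiEntropy P s / (1 + s)) - s / (1 + s) * R := by ring
    _ ≤ -gallagerPhi P (s / (1 + s)) - s / (1 + s) * R := by linarith
    _ ≤ _ := hmem

/-- For a joint probability distribution `P` on `A × E` and `R < H(A|E)`, the exponent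
`max_{0≤s≤1} (H̃_{1+s}(A|E|P^{A,E}) - sR)/2` is at most
`max_{0≤t≤1/2} (-φ(t|P^{A,E}) - tR)`. -/
theorem stmt_16 {A E : Type*} [Fintype A] [Fintype E]
    (P : A → E → ℝ) (hP0 : ∀ a e, 0 ≤ P a e) (hP1 : ∑ a, ∑ e, P a e = 1)
    (R : ℝ)
    (hR : R < -∑ a, ∑ e, P a e * Real.log (P a e / (∑ a', P a' e))) :
    sSup ((fun s : ℝ =>
        (-Real.log (∑ e ∈ univ.filter (fun e => 0 < ∑ a', P a' e),
            ∑ a, P a e ^ (1 + s) * (∑ a', P a' e) ^ (-s)) - s * R) / 2) ''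
        Set.Icc 0 1)
      ≤ sSup ((fun t : ℝ =>
          -Real.log (∑ e, (∑ a, P a e ^ (1 / (1 - t))) ^ (1 - t)) - t * R) ''
        Set.Icc 0 (1 / 2)) :=
  stmt_16_general P hP0 hP1 R
end

section
/- Let X, Y be finite sets, W: X → (probability distributions on Y) a channel, and p a probability distribution on X such that W_p(y) > 0 for every y ∈ Y, where W_p(y) := Σ_x p(x) W_x(y). Then for every t with 0 ≤ t < 1, e^{(1−t)ψ(t/(1−t)|W,p)} ≥ e^{φ(t|W,p)}; that is, ( Σ_y [ Σ_x p(x) W_x(y)^{1/(1−t)} ] W_p(y)^{−t/(1−t)} )^{1−t} ≥ Σ_y ( Σ_x p(x) W_x(y)^{1/(1−t)} )^{1−t}. Consequently the exponent bound e_φ(R|W,p) := max_{0≤t≤1/2} (tR − φ(t|W,p)) is at least e_ψ(R|W,p) := max_{0≤t≤1/2} (tR − (1−t)ψ(t/(1−t)|W,p)) for every R. -/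
/-!
With `q = W_p`, a probability vector with full support, and `a y = ∑ₓ p x W_x(y)^{1/(1-t)}`,
write `a y ^ (1-t) = q y * (a y * q y ^ (-1/(1-t))) ^ (1-t)`. Jensen's inequality for the concave
map `z ↦ z ^ (1-t)` under the weights `q` then gives `e^{φ(t)} ≤ e^{(1-t)ψ(t/(1-t))}`, pointwise
in `t`. The second claim follows by comparing the suprema: the `φ`-objective is bounded above
because `φ ≥ 0`, which is the power-mean inequality `W_p(y) ≤ a y ^ (1-t)` summed over `y`.
-/

open Finset

theorem Real.sum_rpow_le_rpow_sum_mul_rpow {ι : Type*} [Fintype ι] {a q : ι → ℝ}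
    (ha : ∀ i, 0 ≤ a i) (hq : ∀ i, 0 < q i) (hq1 : ∑ i, q i = 1) {s : ℝ} (hs0 : 0 < s)
    (hs1 : s ≤ 1) :
    ∑ i, a i ^ s ≤ (∑ i, a i * q i ^ (1 - 1 / s)) ^ s := by
  set z : ι → ℝ := fun i => a i * q i ^ (-(1 / s))
  have hz : ∀ i, 0 ≤ z i := fun i => mul_nonneg (ha i) (Real.rpow_nonneg (hq i).le _)
  have hterm : ∀ i, a i ^ s = q i * z i ^ s := by
    intro i
    have hqi := hq i
    rw [Real.mul_rpow (ha i) (Real.rpow_nonneg hqi.le _), ← Real.rpow_mul hqi.le,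
      neg_mul, one_div_mul_cancel hs0.ne', Real.rpow_neg_one]
    field_simp
  have hmean : ∀ i, q i * z i = a i * q i ^ (1 - 1 / s) := by
    intro i
    rw [sub_eq_add_neg, Real.rpow_add (hq i), Real.rpow_one]
    ring
  have jensen := (Real.concaveOn_rpow hs0.le hs1).le_map_sum (t := univ)
    (fun i _ => (hq i).le) hq1 (fun i _ => Set.mem_Ici.mpr (hz i))
  simp only [smul_eq_mul] at jensen
  simpa only [hterm, hmean] using jensen

theorem csSup_image_le_csSup_image {α β : Type*} [ConditionallyCompleteLattice β] {s : Set α}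
    {f g : α → β} (hs : s.Nonempty) (hg : BddAbove (g '' s)) (hfg : ∀ x ∈ s, f x ≤ g x) :
    sSup (f '' s) ≤ sSup (g '' s) :=
  csSup_le (hs.image f) fun _ ⟨x, hx, hfx⟩ => hfx ▸ le_csSup_of_le hg ⟨x, hx, rfl⟩ (hfg x hx)

section Channel

variable {X Y : Type*} [Fintype X] [Fintype Y] {W : X → Y → ℝ} {p : X → ℝ}

theorem sum_sum_mul_eq_one (hW1 : ∀ x, ∑ y, W x y = 1) (hp1 : ∑ x, p x = 1) :
    ∑ y, ∑ x, p x * W x y = 1 := by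
  rw [sum_comm]
  simp only [← mul_sum, hW1, mul_one, hp1]

theorem one_le_sum_sum_rpow (hW0 : ∀ x y, 0 ≤ W x y) (hW1 : ∀ x, ∑ y, W x y = 1)
    (hp0 : ∀ x, 0 ≤ p x) (hp1 : ∑ x, p x = 1) {s : ℝ} (hs0 : 0 < s) (hs1 : s ≤ 1) :
    1 ≤ ∑ y, (∑ x, p x * W x y ^ (1 / s)) ^ s := by
  refine (sum_sum_mul_eq_one hW1 hp1).symm.le.trans (sum_le_sum fun y _ => ?_)
  have hmean := Real.arith_mean_le_rpow_mean univ p (W · y) (fun x _ => hp0 x) hp1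
    (fun x _ => hW0 x y) (one_le_one_div hs0 hs1)
  rwa [one_div_one_div] at hmean

theorem sum_rpow_le_rpow_sum_mul_rpow_neg (hW0 : ∀ x y, 0 ≤ W x y)
    (hW1 : ∀ x, ∑ y, W x y = 1) (hp0 : ∀ x, 0 ≤ p x) (hp1 : ∑ x, p x = 1)
    (hWp : ∀ y, 0 < ∑ x, p x * W x y) {t : ℝ} (ht0 : 0 ≤ t) (ht1 : t < 1) :
    ∑ y, (∑ x, p x * W x y ^ (1 / (1 - t))) ^ (1 - t)
      ≤ (∑ y, (∑ x, p x * W x y ^ (1 / (1 - t)))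
          * (∑ x, p x * W x y) ^ (-(t / (1 - t)))) ^ (1 - t) := by
  have hexp : -(t / (1 - t)) = 1 - 1 / (1 - t) := by
    field_simp [(sub_pos.mpr ht1).ne']
    ring
  rw [hexp]
  exact Real.sum_rpow_le_rpow_sum_mul_rpow
    (fun y => sum_nonneg fun x _ => mul_nonneg (hp0 x) (Real.rpow_nonneg (hW0 x y) _))
    hWp (sum_sum_mul_eq_one hW1 hp1) (by linarith) (by linarith)

end Channel

/-- **Comparison of exponents via reverse Hölder.** For a channel `W` and an input
distribution `p` with `W_p(y) > 0` everywhere, for every `t ∈ [0,1)` one has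
`e^{(1-t)ψ(t/(1-t)|W,p)} ≥ e^{φ(t|W,p)}`; consequently, for every `R`, the exponent bound
`e_φ(R|W,p) = max_{0≤t≤1/2} (tR - φ(t|W,p))` is at least
`e_ψ(R|W,p) = max_{0≤t≤1/2} (tR - (1-t)ψ(t/(1-t)|W,p))`. -/
theorem stmt_18 {X Y : Type*} [Fintype X] [Fintype Y]
    (W : X → Y → ℝ) (hW0 : ∀ x y, 0 ≤ W x y) (hW1 : ∀ x, ∑ y, W x y = 1)
    (p : X → ℝ) (hp0 : ∀ x, 0 ≤ p x) (hp1 : ∑ x, p x = 1)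
    (hWp : ∀ y, 0 < ∑ x, p x * W x y) :
    (∀ t : ℝ, 0 ≤ t → t < 1 →
      ∑ y, (∑ x, p x * W x y ^ (1 / (1 - t))) ^ (1 - t)
        ≤ (∑ y, (∑ x, p x * W x y ^ (1 / (1 - t)))
            * (∑ x, p x * W x y) ^ (-(t / (1 - t)))) ^ (1 - t))
    ∧
    (∀ R : ℝ,
      sSup ((fun t : ℝ => t * R - (1 - t) * Real.log
          (∑ y, (∑ x, p x * W x y ^ (1 + t / (1 - t)))
            * (∑ x', p x' * W x' y) ^ (-(t / (1 - t))))) '' Set.Icc 0 (1 / 2))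
        ≤ sSup ((fun t : ℝ => t * R - Real.log
            (∑ y, (∑ x, p x * W x y ^ (1 / (1 - t))) ^ (1 - t))) ''
            Set.Icc 0 (1 / 2))) := by
  refine ⟨fun t ht0 ht1 => sum_rpow_le_rpow_sum_mul_rpow_neg hW0 hW1 hp0 hp1 hWp ht0 ht1,
    fun R => csSup_image_le_csSup_image ⟨0, by norm_num⟩ ?_ ?_⟩
  · refine ⟨|R|, ?_⟩
    rintro _ ⟨t, ⟨ht0, ht12⟩, rfl⟩
    have hφ := Real.log_nonneg (one_le_sum_sum_rpow hW0 hW1 hp0 hp1 (s := 1 - t)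
      (by linarith) (by linarith))
    nlinarith [le_abs_self R, abs_nonneg R]
  · rintro t ⟨ht0, ht12⟩
    have hφ := one_le_sum_sum_rpow hW0 hW1 hp0 hp1 (s := 1 - t) (by linarith) (by linarith)
    have hψ := sum_rpow_le_rpow_sum_mul_rpow_neg hW0 hW1 hp0 hp1 hWp ht0 (by linarith)
    set B := ∑ y, (∑ x, p x * W x y ^ (1 / (1 - t))) * (∑ x, p x * W x y) ^ (-(t / (1 - t)))
    have hB : 0 < B := by
      refine (sum_nonneg fun y _ => mul_nonneg ?_ ?_).lt_of_ne' fun hB0 => ?_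
      · exact sum_nonneg fun x _ => mul_nonneg (hp0 x) (Real.rpow_nonneg (hW0 x y) _)
      · exact Real.rpow_nonneg (hWp y).le _
      · rw [show B = 0 from hB0, Real.zero_rpow (by linarith)] at hψ
        linarith
    have hexp : 1 + t / (1 - t) = 1 / (1 - t) := by
      field_simp [(show (1 : ℝ) - t ≠ 0 by linarith)]
      ring
    simp only [hexp]
    have hlog := Real.log_le_log (by linarith) hψ
    rw [Real.log_rpow hB] at hlog
    linarith
end

section
/- Let X be a finite abelian group, P a probability distribution on X, and define the additive channel W by W_x(z) := P(z − x) for x, z ∈ X. Let p_mix be the uniform distribution on X. Then for every t with 0 ≤ t < 1: e^{φ(t|W,p_mix)} = e^{(1−t)ψ(t/(1−t)|W,p_mix)} = |X|^t · ( Σ_{x∈X} P(x)^{1/(1−t)} )^{1−t} = |X|^t e^{−(1−t) H̃_{1/(1−t)}(X|P)}. -/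
open Finset Real

/-! With the uniform input every inner sum `∑ₓ p_mix(x) P(z - x)^a` is, after the change of
variables `x ↦ z - x`, equal to `|X|⁻¹ ∑ₓ P(x)^a` independently of `z`; in particular the output
distribution is uniform. Both expressions then collapse to `|X|^t (∑ₓ P(x)^{1/(1-t)})^{1-t}`,
using `1 + t/(1-t) = 1/(1-t)`. -/

theorem sum_mul_comp_sub_left {X R : Type*} [Fintype X] [AddGroup X]
    [NonUnitalNonAssocSemiring R] (c : R) (f : X → R) (z : X) : ∑ x, c * f (z - x) = c * ∑ x, f x := by
  rw [← mul_sum]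
  exact congrArg _ ((Equiv.subLeft z).sum_comp f)

theorem mul_rpow_one_sub_one_div_mul {N : ℝ} (hN : 0 < N) {S : ℝ} (hS : 0 ≤ S) (t : ℝ) :
    N * (1 / N * S) ^ (1 - t) = N ^ t * S ^ (1 - t) := by
  rw [mul_rpow (by positivity) hS, one_div, inv_rpow hN.le, ← rpow_neg hN.le, ← mul_assoc,
    mul_comm N, ← rpow_add_one hN.ne', neg_sub, sub_add_cancel]

theorem mul_mul_one_div_rpow_neg {N : ℝ} (hN : 0 < N) (S s : ℝ) :
    N * (1 / N * S * (1 / N) ^ (-s)) = S * N ^ s := by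
  rw [one_div, inv_rpow hN.le, rpow_neg hN.le, inv_inv]
  field_simp

theorem mul_rpow_div_one_sub_rpow_one_sub {N : ℝ} (hN : 0 ≤ N) {S : ℝ} (hS : 0 ≤ S) {t : ℝ}
    (ht : t ≠ 1) : (S * N ^ (t / (1 - t))) ^ (1 - t) = N ^ t * S ^ (1 - t) := by
  rw [mul_rpow hS (rpow_nonneg hN _), ← rpow_mul hN, div_mul_cancel₀ _ (sub_ne_zero.2 ht.symm),
    mul_comm]

theorem stmt_19_general {X : Type*} [Fintype X] [AddCommGroup X]
    (P : X → ℝ) (hP0 : ∀ x, 0 ≤ P x) (hP1 : ∑ x, P x = 1)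
    (t : ℝ) (ht1 : t < 1) :
    (∑ z, (∑ x, (1 / (Fintype.card X : ℝ)) * P (z - x) ^ (1 / (1 - t))) ^ (1 - t)
      = (∑ z, (∑ x, (1 / (Fintype.card X : ℝ)) * P (z - x) ^ (1 + t / (1 - t)))
          * (∑ x, (1 / (Fintype.card X : ℝ)) * P (z - x)) ^ (-(t / (1 - t)))) ^ (1 - t))
    ∧
    ((∑ z, (∑ x, (1 / (Fintype.card X : ℝ)) * P (z - x) ^ (1 + t / (1 - t)))
        * (∑ x, (1 / (Fintype.card X : ℝ)) * P (z - x)) ^ (-(t / (1 - t)))) ^ (1 - t)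
      = (Fintype.card X : ℝ) ^ t * (∑ x, P x ^ (1 / (1 - t))) ^ (1 - t)) := by
  have hN : 0 < (Fintype.card X : ℝ) := Nat.cast_pos.2 Fintype.card_pos
  have hS : 0 ≤ ∑ x, P x ^ (1 / (1 - t)) := sum_nonneg fun x _ => rpow_nonneg (hP0 x) _
  have hexp : 1 + t / (1 - t) = 1 / (1 - t) := by field_simp [(sub_pos.2 ht1).ne']; ring
  have hconv (a : ℝ) (z : X) : ∑ x, 1 / (Fintype.card X : ℝ) * P (z - x) ^ a
      = 1 / (Fintype.card X : ℝ) * ∑ x, P x ^ a :=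
    sum_mul_comp_sub_left _ (fun y => P y ^ a) z
  simp only [hexp, hconv, sum_mul_comp_sub_left _ P, hP1, mul_one, sum_const, card_univ,
    nsmul_eq_mul]
  rw [mul_rpow_one_sub_one_div_mul hN hS, mul_mul_one_div_rpow_neg hN,
    mul_rpow_div_one_sub_rpow_one_sub hN.le hS ht1.ne]
  exact ⟨rfl, rfl⟩

/-- For an additive channel `W_x(z) = P(z - x)` on a finite abelian group `X` with uniform
input distribution, for every `t ∈ [0,1)`:
`e^{φ(t|W,p_mix)} = e^{(1-t)ψ(t/(1-t)|W,p_mix)} = |X|^t (∑_x P(x)^{1/(1-t)})^{1-t}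
 = |X|^t e^{-(1-t)H̃_{1/(1-t)}(X|P)}`. -/
theorem stmt_19 {X : Type*} [Fintype X] [AddCommGroup X]
    (P : X → ℝ) (hP0 : ∀ x, 0 ≤ P x) (hP1 : ∑ x, P x = 1)
    (t : ℝ) (ht0 : 0 ≤ t) (ht1 : t < 1) :
    (∑ z, (∑ x, (1 / (Fintype.card X : ℝ)) * P (z - x) ^ (1 / (1 - t))) ^ (1 - t)
      = (∑ z, (∑ x, (1 / (Fintype.card X : ℝ)) * P (z - x) ^ (1 + t / (1 - t)))
          * (∑ x, (1 / (Fintype.card X : ℝ)) * P (z - x)) ^ (-(t / (1 - t)))) ^ (1 - t))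
    ∧
    ((∑ z, (∑ x, (1 / (Fintype.card X : ℝ)) * P (z - x) ^ (1 + t / (1 - t)))
        * (∑ x, (1 / (Fintype.card X : ℝ)) * P (z - x)) ^ (-(t / (1 - t)))) ^ (1 - t)
      = (Fintype.card X : ℝ) ^ t * (∑ x, P x ^ (1 / (1 - t))) ^ (1 - t)) :=
  stmt_19_general P hP0 hP1 t ht1
end
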